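/- arXiv:2310.11974 — 7 statements merged into one kernel-verified Lean document; each statement's English description precedes it below -/
import Mathlib

section
/- Every solution (u,J) ∈ Z × Y of the coupled kernel problem satisfies the a priori stability bound min(α,η)·(‖u‖_Z² + ‖J‖_Y²)^{1/2} ≤ (‖F‖_{Z*}² + ‖G‖_{Y*}²)^{1/2}. -/
/-- Every solution `(u,J) ∈ Z × Y` of the coupled kernel problem
`a(u,v) + c(u,u,v) - d(J,v) = F(v)` for all `v ∈ Z`,
`e(J,K) + d(K,u) = G(K)` for all `K ∈ Y`,
satisfies the a priori stability bound
`min α η * sqrt(‖u‖² + ‖J‖²) ≤ sqrt(‖F‖² + ‖G‖²)`. -/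
theorem stmt_2
    {Z Y : Type*}
    [NormedAddCommGroup Z] [InnerProductSpace ℝ Z] [CompleteSpace Z]
    [NormedAddCommGroup Y] [InnerProductSpace ℝ Y] [CompleteSpace Y]
    (a : Z →L[ℝ] Z →L[ℝ] ℝ) (e : Y →L[ℝ] Y →L[ℝ] ℝ)
    (d : Y →L[ℝ] Z →L[ℝ] ℝ) (c : Z →L[ℝ] Z →L[ℝ] Z →L[ℝ] ℝ)
    (α η : ℝ) (hα : 0 < α) (hη : 0 < η)
    (ha : ∀ w : Z, α * ‖w‖ ^ 2 ≤ a w w)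
    (he : ∀ M : Y, η * ‖M‖ ^ 2 ≤ e M M)
    (hcskew : ∀ u w : Z, c u w w = 0)
    (F : Z →L[ℝ] ℝ) (G : Y →L[ℝ] ℝ)
    (u : Z) (J : Y)
    (hu : ∀ v : Z, a u v + c u u v - d J v = F v)
    (hJ : ∀ K : Y, e J K + d K u = G K) :
    min α η * Real.sqrt (‖u‖ ^ 2 + ‖J‖ ^ 2)
      ≤ Real.sqrt (‖F‖ ^ 2 + ‖G‖ ^ 2) := by
  set m := min α η with hm
  have hmpos : 0 < m := lt_min hα hη
  set S := Real.sqrt (‖u‖ ^ 2 + ‖J‖ ^ 2) with hS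
  set T := Real.sqrt (‖F‖ ^ 2 + ‖G‖ ^ 2) with hT
  have hSnn : 0 ≤ S := Real.sqrt_nonneg _
  have hTnn : 0 ≤ T := Real.sqrt_nonneg _
  have hS2 : S ^ 2 = ‖u‖ ^ 2 + ‖J‖ ^ 2 := by
    rw [hS, Real.sq_sqrt]; positivity
  have hT2 : T ^ 2 = ‖F‖ ^ 2 + ‖G‖ ^ 2 := by
    rw [hT, Real.sq_sqrt]; positivity
  -- key energy identity
  have h1 := hu u
  have h2 := hJ J
  rw [hcskew u u] at h1
  have key : a u u + e J J = F u + G J := by linarith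
  have hcoer : m * S ^ 2 ≤ F u + G J := by
    have h3 := ha u
    have h4 := he J
    have hmu : m * ‖u‖ ^ 2 ≤ α * ‖u‖ ^ 2 := by
      apply mul_le_mul_of_nonneg_right (min_le_left _ _) (by positivity)
    have hmJ : m * ‖J‖ ^ 2 ≤ η * ‖J‖ ^ 2 := by
      apply mul_le_mul_of_nonneg_right (min_le_right _ _) (by positivity)
    rw [hS2]; nlinarith
  have hFu : F u ≤ ‖F‖ * ‖u‖ := le_trans (le_abs_self _) (F.le_opNorm u)
  have hGJ : G J ≤ ‖G‖ * ‖J‖ := le_trans (le_abs_self _) (G.le_opNorm J)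
  have hcs : ‖F‖ * ‖u‖ + ‖G‖ * ‖J‖ ≤ T * S := by
    nlinarith [sq_nonneg (‖F‖ * ‖J‖ - ‖G‖ * ‖u‖), sq_nonneg (T*S),
      mul_nonneg hTnn hSnn, norm_nonneg F, norm_nonneg G, norm_nonneg u, norm_nonneg J]
  have main : m * S ^ 2 ≤ T * S := by linarith
  rcases eq_or_lt_of_le hSnn with h0 | hpos
  · rw [← h0, mul_zero]; exact hTnn
  · have := mul_le_mul_of_nonneg_right main (le_of_lt (inv_pos.mpr hpos))
    calc m * S = m * S ^ 2 * S⁻¹ := by field_simp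
      _ ≤ T * S * S⁻¹ := this
      _ = T := by field_simp
end

section
/- Let u₁, u₂ ∈ Z and let (w₁,M₁) and (w₂,M₂) be solutions of the linearized problem at u₁ and at u₂, respectively. Then min(α,η)·(‖w₁−w₂‖_Z² + ‖M₁−M₂‖_Y²)^{1/2} ≤ δ·‖u₁−u₂‖_Z·‖w₂‖_Z. In particular, writing C_min := min(α,η) and R := (‖F‖_{Z*}² + ‖G‖_{Y*}²)^{1/2}, and using the stability bound C_min·(‖w₂‖² + ‖M₂‖²)^{1/2} ≤ R for the linearized solution, one obtains (‖w₁−w₂‖² + ‖M₁−M₂‖²)^{1/2} ≤ (δ·R/C_min²)·‖u₁−u₂‖_Z; that is, the solution map (u) ↦ (w,M) of the linearized problem is Lipschitz with constant μ := δ·R·C_min^{−2}. -/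
private lemma cs_aux (p q x y : ℝ) (hp : 0 ≤ p) (hq : 0 ≤ q) (hx : 0 ≤ x) (hy : 0 ≤ y) :
    p * x + q * y ≤ Real.sqrt (p ^ 2 + q ^ 2) * Real.sqrt (x ^ 2 + y ^ 2) := by
  have h1 : Real.sqrt (p ^ 2 + q ^ 2) ^ 2 = p ^ 2 + q ^ 2 := Real.sq_sqrt (by positivity)
  have h2 : Real.sqrt (x ^ 2 + y ^ 2) ^ 2 = x ^ 2 + y ^ 2 := Real.sq_sqrt (by positivity)
  have hs1 : 0 ≤ Real.sqrt (p ^ 2 + q ^ 2) := Real.sqrt_nonneg _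
  have hs2 : 0 ≤ Real.sqrt (x ^ 2 + y ^ 2) := Real.sqrt_nonneg _
  nlinarith [sq_nonneg (p * y - q * x), sq_nonneg (p * x + q * y - Real.sqrt (p ^ 2 + q ^ 2) * Real.sqrt (x ^ 2 + y ^ 2)), mul_nonneg hs1 hs2, mul_nonneg (mul_nonneg hp hx) (mul_nonneg hq hy)]


/-- If `(w₁,M₁)` and `(w₂,M₂)` solve the linearized problem at
`u₁` and `u₂` respectively, then
`min α η * sqrt(‖w₁-w₂‖² + ‖M₁-M₂‖²) ≤ δ * ‖u₁-u₂‖ * ‖w₂‖`, and consequently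
(using the stability bound for `(w₂,M₂)`), with `C_min = min α η` and
`R = sqrt(‖F‖² + ‖G‖²)`,
`sqrt(‖w₁-w₂‖² + ‖M₁-M₂‖²) ≤ (δ * R / C_min²) * ‖u₁-u₂‖`;
i.e. the linearized solution map is Lipschitz with constant `μ = δ R C_min⁻²`. -/
theorem stmt_3
    {Z Y : Type*}
    [NormedAddCommGroup Z] [InnerProductSpace ℝ Z] [CompleteSpace Z]
    [NormedAddCommGroup Y] [InnerProductSpace ℝ Y] [CompleteSpace Y]
    (a : Z →L[ℝ] Z →L[ℝ] ℝ) (e : Y →L[ℝ] Y →L[ℝ] ℝ)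
    (d : Y →L[ℝ] Z →L[ℝ] ℝ) (c : Z →L[ℝ] Z →L[ℝ] Z →L[ℝ] ℝ)
    (α η δ : ℝ) (hα : 0 < α) (hη : 0 < η) (hδ : 0 < δ)
    (ha : ∀ w : Z, α * ‖w‖ ^ 2 ≤ a w w)
    (he : ∀ M : Y, η * ‖M‖ ^ 2 ≤ e M M)
    (hcskew : ∀ u w : Z, c u w w = 0)
    (hcbdd : ∀ u v w : Z, |c u v w| ≤ δ * ‖u‖ * ‖v‖ * ‖w‖)
    (F : Z →L[ℝ] ℝ) (G : Y →L[ℝ] ℝ)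
    (u₁ u₂ : Z) (w₁ w₂ : Z) (M₁ M₂ : Y)
    (h₁v : ∀ v : Z, a w₁ v + c u₁ w₁ v - d M₁ v = F v)
    (h₁K : ∀ K : Y, e M₁ K + d K w₁ = G K)
    (h₂v : ∀ v : Z, a w₂ v + c u₂ w₂ v - d M₂ v = F v)
    (h₂K : ∀ K : Y, e M₂ K + d K w₂ = G K) :
    min α η * Real.sqrt (‖w₁ - w₂‖ ^ 2 + ‖M₁ - M₂‖ ^ 2)
        ≤ δ * ‖u₁ - u₂‖ * ‖w₂‖ ∧
    Real.sqrt (‖w₁ - w₂‖ ^ 2 + ‖M₁ - M₂‖ ^ 2)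
        ≤ δ * Real.sqrt (‖F‖ ^ 2 + ‖G‖ ^ 2) / (min α η) ^ 2 * ‖u₁ - u₂‖ := by
  have hm : (0:ℝ) < min α η := lt_min hα hη
  have e1 := h₁v (w₁ - w₂)
  have e2 := h₂v (w₁ - w₂)
  have e3 := h₁K (M₁ - M₂)
  have e4 := h₂K (M₁ - M₂)
  have s1 := hcskew u₁ (w₁ - w₂)
  have hsum : a (w₁ - w₂) (w₁ - w₂) + e (M₁ - M₂) (M₁ - M₂)
      = - c (u₁ - u₂) w₂ (w₁ - w₂) := by
    simp only [map_sub, ContinuousLinearMap.sub_apply] at e1 e2 e3 e4 s1 ⊢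
    linarith
  have hb : a (w₁ - w₂) (w₁ - w₂) + e (M₁ - M₂) (M₁ - M₂)
      ≤ δ * ‖u₁ - u₂‖ * ‖w₂‖ * ‖w₁ - w₂‖ := by
    rw [hsum]
    exact le_trans (neg_le_abs _) (hcbdd _ _ _)
  have hmain : min α η * (‖w₁ - w₂‖ ^ 2 + ‖M₁ - M₂‖ ^ 2)
      ≤ δ * ‖u₁ - u₂‖ * ‖w₂‖ * ‖w₁ - w₂‖ := by
    have h1 : min α η * ‖w₁ - w₂‖ ^ 2 ≤ a (w₁ - w₂) (w₁ - w₂) :=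
      le_trans (mul_le_mul_of_nonneg_right (min_le_left α η) (sq_nonneg _)) (ha _)
    have h2 : min α η * ‖M₁ - M₂‖ ^ 2 ≤ e (M₁ - M₂) (M₁ - M₂) :=
      le_trans (mul_le_mul_of_nonneg_right (min_le_right α η) (sq_nonneg _)) (he _)
    nlinarith
  have hP0 : (0:ℝ) ≤ ‖w₁ - w₂‖ ^ 2 + ‖M₁ - M₂‖ ^ 2 := by positivity
  set S := Real.sqrt (‖w₁ - w₂‖ ^ 2 + ‖M₁ - M₂‖ ^ 2) with hSdef
  have hS0 : 0 ≤ S := Real.sqrt_nonneg _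
  have hS2 : S ^ 2 = ‖w₁ - w₂‖ ^ 2 + ‖M₁ - M₂‖ ^ 2 := Real.sq_sqrt hP0
  have hφS : ‖w₁ - w₂‖ ≤ S := by
    rw [hSdef]
    have h := Real.sqrt_le_sqrt
      (le_add_of_nonneg_right (sq_nonneg ‖M₁ - M₂‖) :
        ‖w₁ - w₂‖ ^ 2 ≤ ‖w₁ - w₂‖ ^ 2 + ‖M₁ - M₂‖ ^ 2)
    simpa [Real.sqrt_sq (norm_nonneg (w₁ - w₂))] using h
  have part1 : min α η * S ≤ δ * ‖u₁ - u₂‖ * ‖w₂‖ := by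
    rcases eq_or_lt_of_le hS0 with h0 | h0
    · rw [← h0, mul_zero]; positivity
    · have key : min α η * S * S ≤ (δ * ‖u₁ - u₂‖ * ‖w₂‖) * S := by
        have hrhs : (0:ℝ) ≤ δ * ‖u₁ - u₂‖ * ‖w₂‖ := by positivity
        calc min α η * S * S = min α η * (‖w₁ - w₂‖ ^ 2 + ‖M₁ - M₂‖ ^ 2) := by
              rw [mul_assoc, ← sq, hS2]
          _ ≤ δ * ‖u₁ - u₂‖ * ‖w₂‖ * ‖w₁ - w₂‖ := hmain
          _ ≤ (δ * ‖u₁ - u₂‖ * ‖w₂‖) * S := mul_le_mul_of_nonneg_left hφS hrhs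
      exact le_of_mul_le_mul_right key h0
  -- stability bound for (w₂, M₂)
  have hT0 : (0:ℝ) ≤ ‖w₂‖ ^ 2 + ‖M₂‖ ^ 2 := by positivity
  set T := Real.sqrt (‖w₂‖ ^ 2 + ‖M₂‖ ^ 2) with hTdef
  have hT2 : T ^ 2 = ‖w₂‖ ^ 2 + ‖M₂‖ ^ 2 := Real.sq_sqrt hT0
  have hTnn : 0 ≤ T := Real.sqrt_nonneg _
  set R := Real.sqrt (‖F‖ ^ 2 + ‖G‖ ^ 2) with hRdef
  have hR2 : R ^ 2 = ‖F‖ ^ 2 + ‖G‖ ^ 2 := Real.sq_sqrt (by positivity)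
  have hRnn : 0 ≤ R := Real.sqrt_nonneg _
  have hstab : min α η * T ≤ R := by
    have f1 := h₂v w₂
    have f2 := h₂K M₂
    have hsk := hcskew u₂ w₂
    have hFG : a w₂ w₂ + e M₂ M₂ = F w₂ + G M₂ := by linarith
    have hFb : F w₂ ≤ ‖F‖ * ‖w₂‖ := le_trans (le_abs_self _) (F.le_opNorm w₂)
    have hGb : G M₂ ≤ ‖G‖ * ‖M₂‖ := le_trans (le_abs_self _) (G.le_opNorm M₂)
    have hcs : ‖F‖ * ‖w₂‖ + ‖G‖ * ‖M₂‖ ≤ R * T :=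
      cs_aux ‖F‖ ‖G‖ ‖w₂‖ ‖M₂‖ (norm_nonneg _) (norm_nonneg _) (norm_nonneg _) (norm_nonneg _)
    have h1 : min α η * ‖w₂‖ ^ 2 ≤ a w₂ w₂ :=
      le_trans (mul_le_mul_of_nonneg_right (min_le_left α η) (sq_nonneg _)) (ha _)
    have h2 : min α η * ‖M₂‖ ^ 2 ≤ e M₂ M₂ :=
      le_trans (mul_le_mul_of_nonneg_right (min_le_right α η) (sq_nonneg _)) (he _)
    have hTT : min α η * T * T ≤ R * T := by
      calc min α η * T * T = min α η * (‖w₂‖ ^ 2 + ‖M₂‖ ^ 2) := by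
            rw [mul_assoc, ← sq, hT2]
        _ ≤ F w₂ + G M₂ := by rw [mul_add]; linarith
        _ ≤ ‖F‖ * ‖w₂‖ + ‖G‖ * ‖M₂‖ := by linarith
        _ ≤ R * T := hcs
    rcases eq_or_lt_of_le hTnn with h0 | h0
    · rw [← h0, mul_zero]; exact hRnn
    · exact le_of_mul_le_mul_right hTT h0
  have hw2 : min α η * ‖w₂‖ ≤ R := by
    refine le_trans ?_ hstab
    have : ‖w₂‖ ≤ T := by
      rw [hTdef]
      have h := Real.sqrt_le_sqrt
        (le_add_of_nonneg_right (sq_nonneg ‖M₂‖) : ‖w₂‖ ^ 2 ≤ ‖w₂‖ ^ 2 + ‖M₂‖ ^ 2)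
      simpa [Real.sqrt_sq (norm_nonneg w₂)] using h
    exact mul_le_mul_of_nonneg_left this hm.le
  refine ⟨part1, ?_⟩
  rw [div_mul_eq_mul_div, le_div_iff₀ (by positivity)]
  linarith [mul_le_mul_of_nonneg_left part1 hm.le,
    mul_le_mul_of_nonneg_left hw2 (mul_nonneg hδ.le (norm_nonneg (u₁ - u₂)))]
end

section
/- Suppose μ := δ·R·C_min^{−2} < 1, where C_min := min(α,η) and R := (‖F‖_{Z*}² + ‖G‖_{Y*}²)^{1/2}. Then the coupled kernel problem has exactly one solution (u,J) ∈ Z × Y, and this solution satisfies C_min·(‖u‖_Z² + ‖J‖_Y²)^{1/2} ≤ R. -/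
set_option maxHeartbeats 1000000

open InnerProductSpace

noncomputable section MHDAux
set_option linter.unusedSectionVars false
namespace MHDAux

variable {Z Y : Type*}
  [NormedAddCommGroup Z] [InnerProductSpace ℝ Z] [CompleteSpace Z]
  [NormedAddCommGroup Y] [InnerProductSpace ℝ Y] [CompleteSpace Y]

lemma norm_fst_le (x : WithLp 2 (Z × Y)) : ‖x.fst‖ ≤ ‖x‖ := by
  have h := WithLp.prod_norm_sq_eq_of_L2 x
  nlinarith [norm_nonneg x, norm_nonneg x.fst, sq_nonneg ‖x.snd‖]

lemma norm_snd_le (x : WithLp 2 (Z × Y)) : ‖x.snd‖ ≤ ‖x‖ := by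
  have h := WithLp.prod_norm_sq_eq_of_L2 x
  nlinarith [norm_nonneg x, norm_nonneg x.snd, sq_nonneg ‖x.fst‖]

lemma l2_cauchy (A B x y : ℝ) (hA : 0 ≤ A) (hB : 0 ≤ B) (hx : 0 ≤ x) (hy : 0 ≤ y) :
    A * x + B * y ≤ Real.sqrt (A ^ 2 + B ^ 2) * Real.sqrt (x ^ 2 + y ^ 2) := by
  have h1 : (A * x + B * y) ^ 2 ≤ (A ^ 2 + B ^ 2) * (x ^ 2 + y ^ 2) := by
    nlinarith [sq_nonneg (A * y - B * x)]
  have h2 : A * x + B * y = Real.sqrt ((A * x + B * y) ^ 2) :=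
    (Real.sqrt_sq (by positivity)).symm
  rw [h2, ← Real.sqrt_mul (by positivity)]
  exact Real.sqrt_le_sqrt h1

/-- The combined bilinear form on the product space, with frozen convection field `u₀`. -/
def bform (a : Z →L[ℝ] Z →L[ℝ] ℝ) (e : Y →L[ℝ] Y →L[ℝ] ℝ) (d : Y →L[ℝ] Z →L[ℝ] ℝ)
    (c : Z →L[ℝ] Z →L[ℝ] Z →L[ℝ] ℝ) (u₀ : Z) :
    WithLp 2 (Z × Y) →L[ℝ] WithLp 2 (Z × Y) →L[ℝ] ℝ :=
  LinearMap.mkContinuous₂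
    (LinearMap.mk₂ ℝ
      (fun w v => a w.fst v.fst + c u₀ w.fst v.fst - d w.snd v.fst + e w.snd v.snd + d v.snd w.fst)
      (by intro x y z; simp [map_add]; ring)
      (by intro r x z; simp [map_smul]; ring)
      (by intro x y z; simp [map_add]; ring)
      (by intro r x z; simp [map_smul]; ring))
    (‖a‖ + ‖c u₀‖ + ‖d‖ + ‖e‖ + ‖d‖)
    (by
      intro w v
      simp only [LinearMap.mk₂_apply]
      have hw1 := norm_fst_le w; have hw2 := norm_snd_le w
      have hv1 := norm_fst_le v; have hv2 := norm_snd_le v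
      have h1 : ‖a w.fst v.fst‖ ≤ ‖a‖ * ‖w‖ * ‖v‖ := by
        calc ‖a w.fst v.fst‖ ≤ ‖a‖ * ‖w.fst‖ * ‖v.fst‖ := a.le_opNorm₂ _ _
          _ ≤ ‖a‖ * ‖w‖ * ‖v‖ := by gcongr <;> positivity
      have h2 : ‖c u₀ w.fst v.fst‖ ≤ ‖c u₀‖ * ‖w‖ * ‖v‖ := by
        calc ‖c u₀ w.fst v.fst‖ ≤ ‖c u₀‖ * ‖w.fst‖ * ‖v.fst‖ := (c u₀).le_opNorm₂ _ _
          _ ≤ ‖c u₀‖ * ‖w‖ * ‖v‖ := by gcongr <;> positivity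
      have h3 : ‖d w.snd v.fst‖ ≤ ‖d‖ * ‖w‖ * ‖v‖ := by
        calc ‖d w.snd v.fst‖ ≤ ‖d‖ * ‖w.snd‖ * ‖v.fst‖ := d.le_opNorm₂ _ _
          _ ≤ ‖d‖ * ‖w‖ * ‖v‖ := by gcongr <;> positivity
      have h4 : ‖e w.snd v.snd‖ ≤ ‖e‖ * ‖w‖ * ‖v‖ := by
        calc ‖e w.snd v.snd‖ ≤ ‖e‖ * ‖w.snd‖ * ‖v.snd‖ := e.le_opNorm₂ _ _
          _ ≤ ‖e‖ * ‖w‖ * ‖v‖ := by gcongr <;> positivity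
      have h5 : ‖d v.snd w.fst‖ ≤ ‖d‖ * ‖w‖ * ‖v‖ := by
        calc ‖d v.snd w.fst‖ ≤ ‖d‖ * ‖v.snd‖ * ‖w.fst‖ := d.le_opNorm₂ _ _
          _ ≤ ‖d‖ * ‖v‖ * ‖w‖ := by gcongr <;> positivity
          _ = ‖d‖ * ‖w‖ * ‖v‖ := by ring
      have htri : ‖a w.fst v.fst + c u₀ w.fst v.fst - d w.snd v.fst + e w.snd v.snd
          + d v.snd w.fst‖ ≤ ‖a w.fst v.fst‖ + ‖c u₀ w.fst v.fst‖ + ‖d w.snd v.fst‖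
          + ‖e w.snd v.snd‖ + ‖d v.snd w.fst‖ := by
        calc _ ≤ ‖a w.fst v.fst + c u₀ w.fst v.fst - d w.snd v.fst + e w.snd v.snd‖
              + ‖d v.snd w.fst‖ := norm_add_le _ _
          _ ≤ ‖a w.fst v.fst + c u₀ w.fst v.fst - d w.snd v.fst‖ + ‖e w.snd v.snd‖
              + ‖d v.snd w.fst‖ := by gcongr; exact norm_add_le _ _
          _ ≤ ‖a w.fst v.fst + c u₀ w.fst v.fst‖ + ‖d w.snd v.fst‖ + ‖e w.snd v.snd‖
              + ‖d v.snd w.fst‖ := by gcongr; exact norm_sub_le _ _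
          _ ≤ _ := by gcongr; exact norm_add_le _ _
      nlinarith [h1, h2, h3, h4, h5, htri])

@[simp] lemma bform_apply (a : Z →L[ℝ] Z →L[ℝ] ℝ) (e : Y →L[ℝ] Y →L[ℝ] ℝ)
    (d : Y →L[ℝ] Z →L[ℝ] ℝ) (c : Z →L[ℝ] Z →L[ℝ] Z →L[ℝ] ℝ) (u₀ : Z)
    (w v : WithLp 2 (Z × Y)) :
    bform a e d c u₀ w v =
      a w.fst v.fst + c u₀ w.fst v.fst - d w.snd v.fst + e w.snd v.snd + d v.snd w.fst := rfl

/-- The combined right-hand-side functional. -/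
def rhs (F : Z →L[ℝ] ℝ) (G : Y →L[ℝ] ℝ) : WithLp 2 (Z × Y) →L[ℝ] ℝ :=
  LinearMap.mkContinuous
    { toFun := fun v => F v.fst + G v.snd
      map_add' := by intro x y; simp [map_add]; ring
      map_smul' := by intro r x; simp [map_smul]; ring }
    (Real.sqrt (‖F‖ ^ 2 + ‖G‖ ^ 2))
    (by
      intro v
      have h1 : ‖F v.fst + G v.snd‖ ≤ ‖F‖ * ‖v.fst‖ + ‖G‖ * ‖v.snd‖ :=
        (norm_add_le _ _).trans (add_le_add (F.le_opNorm _) (G.le_opNorm _))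
      have h2 := l2_cauchy ‖F‖ ‖G‖ ‖v.fst‖ ‖v.snd‖ (norm_nonneg _) (norm_nonneg _)
        (norm_nonneg _) (norm_nonneg _)
      have h3 : Real.sqrt (‖v.fst‖ ^ 2 + ‖v.snd‖ ^ 2) = ‖v‖ := by
        rw [← WithLp.prod_norm_sq_eq_of_L2, Real.sqrt_sq (norm_nonneg _)]
      rw [h3] at h2
      simpa using h1.trans h2)

@[simp] lemma rhs_apply (F : Z →L[ℝ] ℝ) (G : Y →L[ℝ] ℝ) (v : WithLp 2 (Z × Y)) :
    rhs F G v = F v.fst + G v.snd := rfl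

lemma rhs_bound (F : Z →L[ℝ] ℝ) (G : Y →L[ℝ] ℝ) (v : WithLp 2 (Z × Y)) :
    rhs F G v ≤ Real.sqrt (‖F‖ ^ 2 + ‖G‖ ^ 2) * ‖v‖ := by
  have h1 : ‖F v.fst + G v.snd‖ ≤ ‖F‖ * ‖v.fst‖ + ‖G‖ * ‖v.snd‖ :=
    (norm_add_le _ _).trans (add_le_add (F.le_opNorm _) (G.le_opNorm _))
  have h2 := l2_cauchy ‖F‖ ‖G‖ ‖v.fst‖ ‖v.snd‖ (norm_nonneg _) (norm_nonneg _)
    (norm_nonneg _) (norm_nonneg _)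
  have h3 : Real.sqrt (‖v.fst‖ ^ 2 + ‖v.snd‖ ^ 2) = ‖v‖ := by
    rw [← WithLp.prod_norm_sq_eq_of_L2, Real.sqrt_sq (norm_nonneg _)]
  rw [h3] at h2
  have := (le_abs_self (F v.fst + G v.snd)).trans ((Real.norm_eq_abs _ ▸ h1).trans h2)
  simpa using this


section Main

variable (a : Z →L[ℝ] Z →L[ℝ] ℝ) (e : Y →L[ℝ] Y →L[ℝ] ℝ)
    (d : Y →L[ℝ] Z →L[ℝ] ℝ) (c : Z →L[ℝ] Z →L[ℝ] Z →L[ℝ] ℝ)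
    {α η δ : ℝ}

lemma bform_coercive (hα : 0 < α) (hη : 0 < η)
    (ha : ∀ w : Z, α * ‖w‖ ^ 2 ≤ a w w) (he : ∀ M : Y, η * ‖M‖ ^ 2 ≤ e M M)
    (hcskew : ∀ u w : Z, c u w w = 0) (u₀ : Z) :
    IsCoercive (bform a e d c u₀) := by
  refine ⟨min α η, lt_min hα hη, fun w => ?_⟩
  have hw := WithLp.prod_norm_sq_eq_of_L2 w
  have h1 := ha w.fst
  have h2 := he w.snd
  have hb : bform a e d c u₀ w w = a w.fst w.fst + e w.snd w.snd := by
    rw [bform_apply, hcskew]; ring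
  rw [hb]
  have key : min α η * ‖w‖ ^ 2 = min α η * ‖w.fst‖ ^ 2 + min α η * ‖w.snd‖ ^ 2 := by
    rw [hw]; ring
  nlinarith [mul_le_mul_of_nonneg_right (min_le_left α η) (sq_nonneg ‖w.fst‖),
    mul_le_mul_of_nonneg_right (min_le_right α η) (sq_nonneg ‖w.snd‖)]

variable {B : WithLp 2 (Z × Y) →L[ℝ] WithLp 2 (Z × Y) →L[ℝ] ℝ}

/-- Lax–Milgram solution operator. -/
def solveLin (hB : IsCoercive B) (L : WithLp 2 (Z × Y) →L[ℝ] ℝ) : WithLp 2 (Z × Y) :=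
  hB.continuousLinearEquivOfBilin.symm ((toDual ℝ (WithLp 2 (Z × Y))).symm L)

lemma solveLin_spec (hB : IsCoercive B) (L : WithLp 2 (Z × Y) →L[ℝ] ℝ)
    (v : WithLp 2 (Z × Y)) : B (solveLin hB L) v = L v := by
  have h1 := hB.continuousLinearEquivOfBilin_apply (solveLin hB L) v
  rw [solveLin] at h1 ⊢
  rw [ContinuousLinearEquiv.apply_symm_apply] at h1
  rw [← h1, toDual_symm_apply]

lemma lin_unique (hB : IsCoercive B) {x y : WithLp 2 (Z × Y)}
    (h : ∀ v, B x v = B y v) : x = y := by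
  obtain ⟨C, hC, hco⟩ := hB
  have h0 : B (x - y) (x - y) = 0 := by
    simp only [map_sub, ContinuousLinearMap.sub_apply]
    rw [h x, h y]; ring
  have h1 := hco (x - y)
  rw [h0] at h1
  have h2 : ‖x - y‖ = 0 := by
    by_contra hne
    have hpos : 0 < ‖x - y‖ := (norm_nonneg _).lt_of_ne (Ne.symm hne)
    nlinarith [mul_pos (mul_pos hC hpos) hpos]
  exact sub_eq_zero.mp (norm_eq_zero.mp h2)

/-- The fixed-point map: freeze `w.fst` in the convection term and solve. -/
def Tmap (hcoer : ∀ u₀ : Z, IsCoercive (bform a e d c u₀))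
    (L : WithLp 2 (Z × Y) →L[ℝ] ℝ) : WithLp 2 (Z × Y) → WithLp 2 (Z × Y) :=
  fun w => solveLin (hcoer w.fst) L

lemma Tmap_spec (hcoer : ∀ u₀ : Z, IsCoercive (bform a e d c u₀))
    (L : WithLp 2 (Z × Y) →L[ℝ] ℝ) (w v : WithLp 2 (Z × Y)) :
    bform a e d c w.fst (Tmap a e d c hcoer L w) v = L v :=
  solveLin_spec _ _ _

lemma sol_bound (hα : 0 < α) (hη : 0 < η)
    (ha : ∀ w : Z, α * ‖w‖ ^ 2 ≤ a w w) (he : ∀ M : Y, η * ‖M‖ ^ 2 ≤ e M M)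
    (hcskew : ∀ u w : Z, c u w w = 0)
    (F : Z →L[ℝ] ℝ) (G : Y →L[ℝ] ℝ) (u₀ : Z) (w : WithLp 2 (Z × Y))
    (hsol : ∀ v, bform a e d c u₀ w v = rhs F G v) :
    min α η * ‖w‖ ≤ Real.sqrt (‖F‖ ^ 2 + ‖G‖ ^ 2) := by
  have hR : 0 ≤ Real.sqrt (‖F‖ ^ 2 + ‖G‖ ^ 2) := Real.sqrt_nonneg _
  set R := Real.sqrt (‖F‖ ^ 2 + ‖G‖ ^ 2) with hRdef
  obtain ⟨C, hCpos, hco⟩ := bform_coercive a e d c hα hη ha he hcskew u₀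
  -- we only use the explicit coercivity with constant `min α η`:
  have hC : (0:ℝ) < min α η := lt_min hα hη
  have hcoer : min α η * ‖w‖ * ‖w‖ ≤ bform a e d c u₀ w w := by
    have hw := WithLp.prod_norm_sq_eq_of_L2 w
    have h1 := ha w.fst
    have h2 := he w.snd
    have hb : bform a e d c u₀ w w = a w.fst w.fst + e w.snd w.snd := by
      rw [bform_apply, hcskew]; ring
    rw [hb]
    have key : min α η * ‖w‖ ^ 2 = min α η * ‖w.fst‖ ^ 2 + min α η * ‖w.snd‖ ^ 2 := by
      rw [hw]; ring
    nlinarith [mul_le_mul_of_nonneg_right (min_le_left α η) (sq_nonneg ‖w.fst‖),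
      mul_le_mul_of_nonneg_right (min_le_right α η) (sq_nonneg ‖w.snd‖)]
  have hub : bform a e d c u₀ w w ≤ R * ‖w‖ := by
    rw [hsol w]; exact rhs_bound F G w
  rcases (norm_nonneg w).eq_or_lt with h0 | h0
  · rw [← h0, mul_zero]; exact hR
  · exact le_of_mul_le_mul_right (by nlinarith) h0

lemma Tmap_contract (hα : 0 < α) (hη : 0 < η) (hδ : 0 < δ)
    (ha : ∀ w : Z, α * ‖w‖ ^ 2 ≤ a w w) (he : ∀ M : Y, η * ‖M‖ ^ 2 ≤ e M M)
    (hcskew : ∀ u w : Z, c u w w = 0)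
    (hcbdd : ∀ u v w : Z, |c u v w| ≤ δ * ‖u‖ * ‖v‖ * ‖w‖)
    (F : Z →L[ℝ] ℝ) (G : Y →L[ℝ] ℝ)
    (hcoer : ∀ u₀ : Z, IsCoercive (bform a e d c u₀))
    (w₁ w₂ : WithLp 2 (Z × Y)) :
    ‖Tmap a e d c hcoer (rhs F G) w₁ - Tmap a e d c hcoer (rhs F G) w₂‖ ≤
      δ * Real.sqrt (‖F‖ ^ 2 + ‖G‖ ^ 2) / (min α η) ^ 2 * ‖w₁ - w₂‖ := by
  set R := Real.sqrt (‖F‖ ^ 2 + ‖G‖ ^ 2) with hRdef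
  have hR : 0 ≤ R := Real.sqrt_nonneg _
  have hC : (0:ℝ) < min α η := lt_min hα hη
  set x₁ := Tmap a e d c hcoer (rhs F G) w₁ with hx₁
  set x₂ := Tmap a e d c hcoer (rhs F G) w₂ with hx₂
  set v := x₁ - x₂ with hvdef
  have hv1 : v.fst = x₁.fst - x₂.fst := rfl
  have hv2 : v.snd = x₁.snd - x₂.snd := rfl
  have hE1 := Tmap_spec a e d c hcoer (rhs F G) w₁ v
  have hE2 := Tmap_spec a e d c hcoer (rhs F G) w₂ v
  rw [bform_apply] at hE1 hE2
  rw [← hx₁] at hE1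
  rw [← hx₂] at hE2
  -- component-wise linear expansions
  have hA : a v.fst v.fst = a x₁.fst v.fst - a x₂.fst v.fst := by
    rw [hv1]
    simp only [map_sub, ContinuousLinearMap.sub_apply]
    ring
  have hEe : e v.snd v.snd = e x₁.snd v.snd - e x₂.snd v.snd := by
    rw [hv2]
    simp only [map_sub, ContinuousLinearMap.sub_apply]
    ring
  have hD1 : d v.snd v.fst = d x₁.snd v.fst - d x₂.snd v.fst := by
    rw [hv2]
    simp only [map_sub, ContinuousLinearMap.sub_apply]
  have hD2 : d v.snd v.fst = d v.snd x₁.fst - d v.snd x₂.fst := by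
    rw [hv1]
    simp only [map_sub, ContinuousLinearMap.sub_apply]
  have hC1 : c (w₁.fst - w₂.fst) x₁.fst v.fst
      = c w₁.fst x₁.fst v.fst - c w₂.fst x₁.fst v.fst := by
    simp only [map_sub, ContinuousLinearMap.sub_apply]
  have hC2 : c w₂.fst x₁.fst v.fst - c w₂.fst x₂.fst v.fst
      = c w₂.fst v.fst v.fst := by
    rw [hv1]
    simp only [map_sub, ContinuousLinearMap.sub_apply]
    ring
  have hC0 : c w₂.fst v.fst v.fst = 0 := hcskew _ _
  have key : a v.fst v.fst + e v.snd v.snd = -(c (w₁.fst - w₂.fst) x₁.fst v.fst) := by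
    linarith [hE1, hE2, hA, hEe, hD1, hD2, hC1, hC2, hC0]
  -- coercivity lower bound
  have hlow : min α η * ‖v‖ ^ 2 ≤ a v.fst v.fst + e v.snd v.snd := by
    have hw := WithLp.prod_norm_sq_eq_of_L2 v
    have h1 := ha v.fst
    have h2 := he v.snd
    have keyn : min α η * ‖v‖ ^ 2 = min α η * ‖v.fst‖ ^ 2 + min α η * ‖v.snd‖ ^ 2 := by
      rw [hw]; ring
    nlinarith [mul_le_mul_of_nonneg_right (min_le_left α η) (sq_nonneg ‖v.fst‖),
      mul_le_mul_of_nonneg_right (min_le_right α η) (sq_nonneg ‖v.snd‖)]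
  -- upper bound on the trilinear remainder
  have hcb := hcbdd (w₁.fst - w₂.fst) x₁.fst v.fst
  have hneg : -(c (w₁.fst - w₂.fst) x₁.fst v.fst)
      ≤ δ * ‖w₁.fst - w₂.fst‖ * ‖x₁.fst‖ * ‖v.fst‖ :=
    (neg_le_abs _).trans hcb
  have hwfst : ‖w₁.fst - w₂.fst‖ ≤ ‖w₁ - w₂‖ := by
    have : w₁.fst - w₂.fst = (w₁ - w₂).fst := rfl
    rw [this]; exact norm_fst_le _
  have hx1b : min α η * ‖x₁‖ ≤ R :=
    sol_bound a e d c hα hη ha he hcskew F G w₁.fst x₁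
      (fun v' => Tmap_spec a e d c hcoer (rhs F G) w₁ v')
  have hx1fst : ‖x₁.fst‖ ≤ R / min α η := by
    rw [le_div_iff₀ hC]
    calc ‖x₁.fst‖ * min α η ≤ ‖x₁‖ * min α η := by
          gcongr; exact norm_fst_le _
      _ = min α η * ‖x₁‖ := by ring
      _ ≤ R := hx1b
  have hvfst : ‖v.fst‖ ≤ ‖v‖ := norm_fst_le _
  have hmain : min α η * ‖v‖ ^ 2 ≤ δ * ‖w₁ - w₂‖ * (R / min α η) * ‖v‖ := by
    have step : δ * ‖w₁.fst - w₂.fst‖ * ‖x₁.fst‖ * ‖v.fst‖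
        ≤ δ * ‖w₁ - w₂‖ * (R / min α η) * ‖v‖ := by
      gcongr <;> positivity
    linarith [key, hlow, hneg, step]
  rcases (norm_nonneg v).eq_or_lt with h0 | h0
  · rw [hvdef] at h0
    rw [← h0]
    positivity
  · have key2 : (min α η) ^ 2 * ‖v‖ ^ 2 ≤ δ * R * ‖w₁ - w₂‖ * ‖v‖ := by
      have := mul_le_mul_of_nonneg_left hmain (le_of_lt hC)
      have hne : min α η ≠ 0 := ne_of_gt hC
      have hcancel : min α η * (R / min α η) = R := by field_simp
      calc (min α η) ^ 2 * ‖v‖ ^ 2 = min α η * (min α η * ‖v‖ ^ 2) := by ring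
        _ ≤ min α η * (δ * ‖w₁ - w₂‖ * (R / min α η) * ‖v‖) := this
        _ = (min α η * (R / min α η)) * (δ * ‖w₁ - w₂‖ * ‖v‖) := by ring
        _ = δ * R * ‖w₁ - w₂‖ * ‖v‖ := by rw [hcancel]; ring
    rw [div_mul_eq_mul_div, le_div_iff₀ (by positivity)]
    exact le_of_mul_le_mul_right (by nlinarith [key2]) h0

lemma sol_iff (F : Z →L[ℝ] ℝ) (G : Y →L[ℝ] ℝ) (w : WithLp 2 (Z × Y)) :
    ((∀ v : Z, a w.fst v + c w.fst w.fst v - d w.snd v = F v) ∧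
     (∀ K : Y, e w.snd K + d K w.fst = G K)) ↔
    (∀ v : WithLp 2 (Z × Y), bform a e d c w.fst w v = rhs F G v) := by
  constructor
  · rintro ⟨h1, h2⟩ v
    rw [bform_apply, rhs_apply]
    have e1 := h1 v.fst
    have e2 := h2 v.snd
    linarith
  · intro h
    constructor
    · intro v0
      have h' : a w.fst v0 + c w.fst w.fst v0 - d w.snd v0 + e w.snd 0 + d 0 w.fst
          = F v0 + G 0 := h (WithLp.toLp 2 (v0, 0))
      simpa using h'
    · intro K
      have h' : a w.fst 0 + c w.fst w.fst 0 - d w.snd 0 + e w.snd K + d K w.fst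
          = F 0 + G K := h (WithLp.toLp 2 (0, K))
      simpa using h'

theorem kernel_exu (hα : 0 < α) (hη : 0 < η) (hδ : 0 < δ)
    (ha : ∀ w : Z, α * ‖w‖ ^ 2 ≤ a w w) (he : ∀ M : Y, η * ‖M‖ ^ 2 ≤ e M M)
    (hcskew : ∀ u w : Z, c u w w = 0)
    (hcbdd : ∀ u v w : Z, |c u v w| ≤ δ * ‖u‖ * ‖v‖ * ‖w‖)
    (F : Z →L[ℝ] ℝ) (G : Y →L[ℝ] ℝ)
    (hμ : δ * Real.sqrt (‖F‖ ^ 2 + ‖G‖ ^ 2) / (min α η) ^ 2 < 1) :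
    ∃! w : WithLp 2 (Z × Y),
        (∀ v : Z, a w.fst v + c w.fst w.fst v - d w.snd v = F v) ∧
        (∀ K : Y, e w.snd K + d K w.fst = G K) := by
  have hcoer : ∀ u₀ : Z, IsCoercive (bform a e d c u₀) :=
    bform_coercive a e d c hα hη ha he hcskew
  have hfix : ∀ w : WithLp 2 (Z × Y),
      (∀ v, bform a e d c w.fst w v = rhs F G v) ↔
        Tmap a e d c hcoer (rhs F G) w = w := by
    intro w
    constructor
    · intro h
      exact lin_unique (hcoer w.fst)
        (fun v => (Tmap_spec a e d c hcoer (rhs F G) w v).trans (h v).symm)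
    · intro h v
      have h2 := Tmap_spec a e d c hcoer (rhs F G) w v
      rwa [h] at h2
  set μ := δ * Real.sqrt (‖F‖ ^ 2 + ‖G‖ ^ 2) / (min α η) ^ 2 with hμdef
  have hCpos : (0:ℝ) < min α η := lt_min hα hη
  have hμ0 : 0 ≤ μ := by positivity
  have hlip : LipschitzWith μ.toNNReal (Tmap a e d c hcoer (rhs F G)) := by
    apply LipschitzWith.of_dist_le_mul
    intro x y
    rw [dist_eq_norm, dist_eq_norm, Real.coe_toNNReal μ hμ0]
    exact Tmap_contract a e d c hα hη hδ ha he hcskew hcbdd F G hcoer x y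
  have hcontr : ContractingWith μ.toNNReal (Tmap a e d c hcoer (rhs F G)) := by
    refine ⟨?_, hlip⟩
    rw [← Real.toNNReal_one]
    exact (Real.toNNReal_lt_toNNReal_iff one_pos).mpr hμ
  obtain ⟨w₀, hw₀fix, -⟩ := hcontr.exists_fixedPoint 0 (edist_ne_top _ _)
  refine ⟨w₀, ?_, ?_⟩
  · exact (sol_iff a e d c F G w₀).mpr ((hfix w₀).mpr hw₀fix)
  · intro y hy
    have hyfix : Function.IsFixedPt (Tmap a e d c hcoer (rhs F G)) y :=
      (hfix y).mp ((sol_iff a e d c F G y).mp hy)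
    exact hcontr.fixedPoint_unique' hyfix hw₀fix

end Main
end MHDAux

/-- If `μ := δ * R / C_min² < 1`, where `C_min = min α η` and
`R = sqrt(‖F‖² + ‖G‖²)`, then the coupled kernel problem
`a(u,v) + c(u,u,v) - d(J,v) = F(v)` for all `v ∈ Z`,
`e(J,K) + d(K,u) = G(K)` for all `K ∈ Y`,
has exactly one solution `(u,J) ∈ Z × Y`, and every solution satisfies
`C_min * sqrt(‖u‖² + ‖J‖²) ≤ R`. -/
theorem stmt_4
    {Z Y : Type*}
    [NormedAddCommGroup Z] [InnerProductSpace ℝ Z] [CompleteSpace Z]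
    [NormedAddCommGroup Y] [InnerProductSpace ℝ Y] [CompleteSpace Y]
    (a : Z →L[ℝ] Z →L[ℝ] ℝ) (e : Y →L[ℝ] Y →L[ℝ] ℝ)
    (d : Y →L[ℝ] Z →L[ℝ] ℝ) (c : Z →L[ℝ] Z →L[ℝ] Z →L[ℝ] ℝ)
    (α η δ : ℝ) (hα : 0 < α) (hη : 0 < η) (hδ : 0 < δ)
    (ha : ∀ w : Z, α * ‖w‖ ^ 2 ≤ a w w)
    (he : ∀ M : Y, η * ‖M‖ ^ 2 ≤ e M M)
    (hcskew : ∀ u w : Z, c u w w = 0)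
    (hcbdd : ∀ u v w : Z, |c u v w| ≤ δ * ‖u‖ * ‖v‖ * ‖w‖)
    (F : Z →L[ℝ] ℝ) (G : Y →L[ℝ] ℝ)
    (hμ : δ * Real.sqrt (‖F‖ ^ 2 + ‖G‖ ^ 2) / (min α η) ^ 2 < 1) :
    (∃! uJ : Z × Y,
        (∀ v : Z, a uJ.1 v + c uJ.1 uJ.1 v - d uJ.2 v = F v) ∧
        (∀ K : Y, e uJ.2 K + d K uJ.1 = G K)) ∧
    (∀ uJ : Z × Y,
        ((∀ v : Z, a uJ.1 v + c uJ.1 uJ.1 v - d uJ.2 v = F v) ∧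
         (∀ K : Y, e uJ.2 K + d K uJ.1 = G K)) →
        min α η * Real.sqrt (‖uJ.1‖ ^ 2 + ‖uJ.2‖ ^ 2)
          ≤ Real.sqrt (‖F‖ ^ 2 + ‖G‖ ^ 2)) := by
  constructor
  · obtain ⟨w₀, hw₀, huniq⟩ :=
      MHDAux.kernel_exu a e d c hα hη hδ ha he hcskew hcbdd F G hμ
    refine ⟨(WithLp.equiv 2 (Z × Y)) w₀, hw₀, ?_⟩
    intro y hy
    exact (WithLp.equiv 2 (Z × Y)).symm_apply_eq.mp (huniq ((WithLp.equiv 2 (Z × Y)).symm y) hy)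
  · intro uJ hsol
    set w : WithLp 2 (Z × Y) := (WithLp.equiv 2 (Z × Y)).symm uJ with hwdef
    have hn : ‖w‖ ^ 2 = ‖uJ.1‖ ^ 2 + ‖uJ.2‖ ^ 2 := WithLp.prod_norm_sq_eq_of_L2 w
    have hb : min α η * ‖w‖ ≤ Real.sqrt (‖F‖ ^ 2 + ‖G‖ ^ 2) := by
      apply MHDAux.sol_bound a e d c hα hη ha he hcskew F G w.fst w
      exact (MHDAux.sol_iff a e d c F G w).mp hsol
    have hn' : Real.sqrt (‖uJ.1‖ ^ 2 + ‖uJ.2‖ ^ 2) = ‖w‖ := by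
      rw [← hn, Real.sqrt_sq (norm_nonneg _)]
    rw [hn']
    exact hb
end MHDAux
end

section
/- Suppose δ·min(α,η)^{−2}·(‖F‖_{V*}² + ‖G‖_{S*}²)^{1/2} < 1. Then the full mixed problem has exactly one solution (u,p,J,φ) ∈ V × Q × S × Ψ, and it satisfies min(α,η)·(‖u‖_V² + ‖J‖_S²)^{1/2} ≤ (‖F‖_{V*}² + ‖G‖_{S*}²)^{1/2}. -/
open InnerProductSpace RealInnerProductSpace

lemma recover_aux {Q V : Type*}
    [NormedAddCommGroup V] [InnerProductSpace ℝ V] [CompleteSpace V]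
    [NormedAddCommGroup Q] [InnerProductSpace ℝ Q] [CompleteSpace Q]
    (b : Q →L[ℝ] V →L[ℝ] ℝ) (β : ℝ) (hβ : 0 < β)
    (hlow : ∀ q, β * ‖q‖ ≤ ‖b q‖)
    (L : V →L[ℝ] ℝ) (hL : ∀ v : V, (∀ q, b q v = 0) → L v = 0) :
    ∃! q : Q, ∀ v : V, b q v = L v := by
  set R : StrongDual ℝ V → V := fun f => (toDual ℝ V).symm f with hR
  have hRapp : ∀ (f : V →L[ℝ] ℝ) (v : V), ⟪R f, v⟫_ℝ = f v := fun f v =>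
    toDual_symm_apply
  set f : Q → V := fun q => R (b q) with hf
  have hfadd : ∀ q q', f (q + q') = f q + f q' := by
    intro q q'; simp [hf, hR, map_add]
  have hfsmul : ∀ (r : ℝ) q, f (r • q) = r • f q := by
    intro r q; simp [hf, hR, map_smul]
  have hfnorm : ∀ q, ‖f q‖ = ‖b q‖ := by
    intro q; simp [hf, hR]
  set M : Submodule ℝ V :=
    { carrier := Set.range f
      add_mem' := by rintro x y ⟨q, rfl⟩ ⟨q', rfl⟩; exact ⟨q + q', hfadd q q'⟩
      zero_mem' := ⟨0, by simp [hf, hR]⟩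
      smul_mem' := by rintro r x ⟨q, rfl⟩; exact ⟨r • q, hfsmul r q⟩ } with hM
  have hMclosed : IsClosed (M : Set V) := by
    have hanti : AntilipschitzWith ⟨β⁻¹, by positivity⟩ f := by
      refine AntilipschitzWith.of_le_mul_dist fun x y => ?_
      have h1 : f x - f y = f (x - y) := by
        simp [hf, hR, ← map_sub]
      rw [dist_eq_norm, dist_eq_norm, h1, hfnorm]
      have := hlow (x - y)
      change ‖x - y‖ ≤ β⁻¹ * ‖b (x - y)‖
      rw [← le_div_iff₀' hβ] at this
      simpa [inv_mul_eq_div] using this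
    have huc : UniformContinuous f := by
      have : f = (fun g => (toDual ℝ V).symm g) ∘ (fun q => b q) := rfl
      rw [this]
      exact ((toDual ℝ V).symm.isometry.uniformContinuous).comp b.uniformContinuous
    exact hanti.isClosed_range huc
  have hker : ∀ v : V, v ∈ Mᗮ ↔ ∀ q, b q v = 0 := by
    intro v
    rw [Submodule.mem_orthogonal]
    constructor
    · intro h q
      have := h (f q) ⟨q, rfl⟩
      rwa [hRapp] at this
    · rintro h x ⟨q, rfl⟩
      rw [hRapp]; exact h q
  have hxL : R L ∈ M := by
    have : R L ∈ Mᗮᗮ := by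
      rw [Submodule.mem_orthogonal]
      intro u hu
      rw [real_inner_comm, hRapp]
      exact hL u ((hker u).mp hu)
    rwa [Submodule.orthogonal_orthogonal_eq_closure,
      hMclosed.submodule_topologicalClosure_eq] at this
  obtain ⟨q, hq⟩ := hxL
  have heq : ∀ v, b q v = L v := by
    intro v
    rw [← hRapp (b q) v, ← hRapp L v]
    show ⟪f q, v⟫_ℝ = ⟪R L, v⟫_ℝ
    rw [hq]
  refine ⟨q, heq, fun q' hq' => ?_⟩
  have : b (q' - q) = 0 := by
    ext v; simp [hq' v, heq v]
  have h0 : β * ‖q' - q‖ ≤ 0 := by simpa [this] using hlow (q' - q)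
  have hn : ‖q' - q‖ ≤ 0 := by nlinarith [norm_nonneg (q' - q)]
  have : q' - q = 0 := by
    rw [← norm_le_zero_iff]; exact hn
  exact sub_eq_zero.mp this

/-- Cauchy–Schwarz in ℝ². -/
lemma cauchy_two (p q r s : ℝ) :
    p * r + q * s ≤ Real.sqrt (p ^ 2 + q ^ 2) * Real.sqrt (r ^ 2 + s ^ 2) := by
  have hX : Real.sqrt (p ^ 2 + q ^ 2) ^ 2 = p ^ 2 + q ^ 2 :=
    Real.sq_sqrt (by positivity)
  have hY : Real.sqrt (r ^ 2 + s ^ 2) ^ 2 = r ^ 2 + s ^ 2 :=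
    Real.sq_sqrt (by positivity)
  nlinarith [sq_nonneg (p * s - q * r), Real.sqrt_nonneg (p ^ 2 + q ^ 2),
    Real.sqrt_nonneg (r ^ 2 + s ^ 2), sq_nonneg (p * r + q * s),
    mul_nonneg (Real.sqrt_nonneg (p ^ 2 + q ^ 2)) (Real.sqrt_nonneg (r ^ 2 + s ^ 2)),
    sq_nonneg (Real.sqrt (p ^ 2 + q ^ 2) * Real.sqrt (r ^ 2 + s ^ 2) - p * r - q * s),
    sq_nonneg (Real.sqrt (p ^ 2 + q ^ 2) * Real.sqrt (r ^ 2 + s ^ 2) + p * r + q * s)]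
set_option maxHeartbeats 1000000 in
/-- Under the coercivity of `a` on `V`, coercivity of `e` on the
kernel `Y = {K : m(ψ,K) = 0 ∀ψ}`, the inf-sup conditions for `b` and `m`, the
skew-symmetry and boundedness of the trilinear form `c`, and the smallness
condition `δ * min(α,η)⁻² * sqrt(‖F‖² + ‖G‖²) < 1`, the full mixed problem
has exactly one solution `(u,p,J,φ) ∈ V × Q × S × Ψ`, and every solution
satisfies `min(α,η) * sqrt(‖u‖² + ‖J‖²) ≤ sqrt(‖F‖² + ‖G‖²)`. -/
theorem stmt_5
    {V Q S Ψ : Type*}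
    [NormedAddCommGroup V] [InnerProductSpace ℝ V] [CompleteSpace V]
    [NormedAddCommGroup Q] [InnerProductSpace ℝ Q] [CompleteSpace Q]
    [NormedAddCommGroup S] [InnerProductSpace ℝ S] [CompleteSpace S]
    [NormedAddCommGroup Ψ] [InnerProductSpace ℝ Ψ] [CompleteSpace Ψ]
    (a : V →L[ℝ] V →L[ℝ] ℝ) (b : Q →L[ℝ] V →L[ℝ] ℝ)
    (m : Ψ →L[ℝ] S →L[ℝ] ℝ) (e : S →L[ℝ] S →L[ℝ] ℝ)
    (d : S →L[ℝ] V →L[ℝ] ℝ) (c : V →L[ℝ] V →L[ℝ] V →L[ℝ] ℝ)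
    (α η δ β₁ β₂ : ℝ)
    (hα : 0 < α) (hη : 0 < η) (hδ : 0 < δ) (hβ₁ : 0 < β₁) (hβ₂ : 0 < β₂)
    (ha : ∀ v : V, α * ‖v‖ ^ 2 ≤ a v v)
    (he : ∀ K : S, (∀ ψ : Ψ, m ψ K = 0) → η * ‖K‖ ^ 2 ≤ e K K)
    (hb : ∀ q : Q, β₁ * ‖q‖ ≤ ⨆ v : {v : V // v ≠ 0}, b q v / ‖(v : V)‖)
    (hm : ∀ ψ : Ψ, β₂ * ‖ψ‖ ≤ ⨆ K : {K : S // K ≠ 0}, m ψ K / ‖(K : S)‖)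
    (hcskew : ∀ u w : V, c u w w = 0)
    (hcbdd : ∀ u v w : V, |c u v w| ≤ δ * ‖u‖ * ‖v‖ * ‖w‖)
    (F : V →L[ℝ] ℝ) (G : S →L[ℝ] ℝ)
    (hsmall : δ / (min α η) ^ 2 * Real.sqrt (‖F‖ ^ 2 + ‖G‖ ^ 2) < 1) :
    (∃! x : V × Q × S × Ψ,
        (∀ v : V, a x.1 v + c x.1 x.1 v - b x.2.1 v - d x.2.2.1 v = F v) ∧
        (∀ q : Q, b q x.1 = 0) ∧
        (∀ K : S, e x.2.2.1 K - m x.2.2.2 K + d K x.1 = G K) ∧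
        (∀ ψ : Ψ, m ψ x.2.2.1 = 0)) ∧
    (∀ x : V × Q × S × Ψ,
        ((∀ v : V, a x.1 v + c x.1 x.1 v - b x.2.1 v - d x.2.2.1 v = F v) ∧
         (∀ q : Q, b q x.1 = 0) ∧
         (∀ K : S, e x.2.2.1 K - m x.2.2.2 K + d K x.1 = G K) ∧
         (∀ ψ : Ψ, m ψ x.2.2.1 = 0)) →
        min α η * Real.sqrt (‖x.1‖ ^ 2 + ‖x.2.2.1‖ ^ 2)
          ≤ Real.sqrt (‖F‖ ^ 2 + ‖G‖ ^ 2)) := by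
  classical
  set γ : ℝ := min α η with hγdef
  have hγ : 0 < γ := lt_min hα hη
  have hγa : γ ≤ α := min_le_left _ _
  have hγe : γ ≤ η := min_le_right _ _
  clear_value γ
  set Rn : ℝ := Real.sqrt (‖F‖ ^ 2 + ‖G‖ ^ 2) with hRndef
  have hRn0 : 0 ≤ Rn := by rw [hRndef]; exact Real.sqrt_nonneg _
  clear_value Rn
  -- inf-sup conditions give lower bounds on operator norms
  have hbn : ∀ q : Q, β₁ * ‖q‖ ≤ ‖b q‖ := by
    intro q
    refine (hb q).trans (Real.iSup_le (fun v => ?_) (norm_nonneg _))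
    have hvpos : 0 < ‖(v : V)‖ := norm_pos_iff.mpr v.2
    rw [div_le_iff₀ hvpos]
    calc b q v ≤ |b q (v : V)| := le_abs_self _
      _ = ‖b q (v : V)‖ := (Real.norm_eq_abs _).symm
      _ ≤ ‖b q‖ * ‖(v : V)‖ := (b q).le_opNorm _
  have hmn : ∀ ψ : Ψ, β₂ * ‖ψ‖ ≤ ‖m ψ‖ := by
    intro ψ
    refine (hm ψ).trans (Real.iSup_le (fun K => ?_) (norm_nonneg _))
    have hvpos : 0 < ‖(K : S)‖ := norm_pos_iff.mpr K.2
    rw [div_le_iff₀ hvpos]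
    calc m ψ K ≤ |m ψ (K : S)| := le_abs_self _
      _ = ‖m ψ (K : S)‖ := (Real.norm_eq_abs _).symm
      _ ≤ ‖m ψ‖ * ‖(K : S)‖ := (m ψ).le_opNorm _
  -- kernels
  obtain ⟨Z, hZmem⟩ : ∃ Z : Submodule ℝ V, ∀ v : V, v ∈ Z ↔ ∀ q : Q, b q v = 0 :=
    ⟨{ carrier := {v | ∀ q : Q, b q v = 0}
       add_mem' := by intro x y hx hy q; simp only [Set.mem_setOf_eq] at *
                      rw [map_add, hx q, hy q]; ring
       zero_mem' := by intro q; simp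
       smul_mem' := by intro r x hx q; simp only [Set.mem_setOf_eq] at *
                       rw [map_smul]; simp [hx q] }, fun v => Iff.rfl⟩
  obtain ⟨Y, hYmem⟩ : ∃ Y : Submodule ℝ S, ∀ K : S, K ∈ Y ↔ ∀ ψ : Ψ, m ψ K = 0 :=
    ⟨{ carrier := {K | ∀ ψ : Ψ, m ψ K = 0}
       add_mem' := by intro x y hx hy ψ; simp only [Set.mem_setOf_eq] at *
                      rw [map_add, hx ψ, hy ψ]; ring
       zero_mem' := by intro ψ; simp
       smul_mem' := by intro r x hx ψ; simp only [Set.mem_setOf_eq] at *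
                       rw [map_smul]; simp [hx ψ] }, fun K => Iff.rfl⟩
  have hZc : IsClosed (Z : Set V) := by
    have h : (Z : Set V) = ⋂ q : Q, (b q) ⁻¹' {0} := by
      ext v
      simp only [Set.mem_iInter, Set.mem_preimage, Set.mem_singleton_iff, SetLike.mem_coe, hZmem]
    rw [h]
    exact isClosed_iInter fun q => isClosed_singleton.preimage (b q).continuous
  have hYc : IsClosed (Y : Set S) := by
    have h : (Y : Set S) = ⋂ ψ : Ψ, (m ψ) ⁻¹' {0} := by
      ext K
      simp only [Set.mem_iInter, Set.mem_preimage, Set.mem_singleton_iff, SetLike.mem_coe, hYmem]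
    rw [h]
    exact isClosed_iInter fun ψ => isClosed_singleton.preimage (m ψ).continuous
  haveI : CompleteSpace ↥Z := hZc.completeSpace_coe
  haveI : CompleteSpace ↥Y := hYc.completeSpace_coe
  -- the product Hilbert space and projections
  obtain ⟨πV, hπVapp⟩ : ∃ πV : WithLp 2 (↥Z × ↥Y) →L[ℝ] V,
      ∀ x : WithLp 2 (↥Z × ↥Y), πV x = (x.fst : V) :=
    ⟨Z.subtypeL.comp ((ContinuousLinearMap.fst ℝ ↥Z ↥Y).comp
      ((WithLp.prodContinuousLinearEquiv 2 ℝ ↥Z ↥Y : WithLp 2 (↥Z × ↥Y) ≃L[ℝ] ↥Z × ↥Y) :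
        WithLp 2 (↥Z × ↥Y) →L[ℝ] ↥Z × ↥Y)), fun _ => rfl⟩
  obtain ⟨πS, hπSapp⟩ : ∃ πS : WithLp 2 (↥Z × ↥Y) →L[ℝ] S,
      ∀ x : WithLp 2 (↥Z × ↥Y), πS x = (x.snd : S) :=
    ⟨Y.subtypeL.comp ((ContinuousLinearMap.snd ℝ ↥Z ↥Y).comp
      ((WithLp.prodContinuousLinearEquiv 2 ℝ ↥Z ↥Y : WithLp 2 (↥Z × ↥Y) ≃L[ℝ] ↥Z × ↥Y) :
        WithLp 2 (↥Z × ↥Y) →L[ℝ] ↥Z × ↥Y)), fun _ => rfl⟩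
  have hmemV : ∀ x : WithLp 2 (↥Z × ↥Y), ∀ q : Q, b q (πV x) = 0 := fun x => by
    rw [hπVapp]; exact (hZmem _).mp x.fst.2
  have hmemS : ∀ x : WithLp 2 (↥Z × ↥Y), ∀ ψ : Ψ, m ψ (πS x) = 0 := fun x => by
    rw [hπSapp]; exact (hYmem _).mp x.snd.2
  have hnormE : ∀ x : WithLp 2 (↥Z × ↥Y), ‖x‖ ^ 2 = ‖πV x‖ ^ 2 + ‖πS x‖ ^ 2 := by
    intro x
    rw [WithLp.prod_norm_sq_eq_of_L2, hπVapp, hπSapp]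
    rfl
  have hπVle : ∀ x : WithLp 2 (↥Z × ↥Y), ‖πV x‖ ≤ ‖x‖ := by
    intro x
    nlinarith [hnormE x, norm_nonneg (πV x), norm_nonneg (πS x), norm_nonneg x,
      sq_nonneg (‖πV x‖ - ‖x‖), sq_nonneg (‖πV x‖ + ‖x‖)]
  have hπSle : ∀ x : WithLp 2 (↥Z × ↥Y), ‖πS x‖ ≤ ‖x‖ := by
    intro x
    nlinarith [hnormE x, norm_nonneg (πV x), norm_nonneg (πS x), norm_nonneg x,
      sq_nonneg (‖πS x‖ - ‖x‖), sq_nonneg (‖πS x‖ + ‖x‖)]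
  -- the bilinear form of the reduced problem
  set Bf : V → (WithLp 2 (↥Z × ↥Y) →L[ℝ] WithLp 2 (↥Z × ↥Y) →L[ℝ] ℝ) := fun w =>
    a.bilinearComp πV πV - d.bilinearComp πS πV + e.bilinearComp πS πS +
      d.flip.bilinearComp πV πS + (c w).bilinearComp πV πV with hBfdef
  have hBapp : ∀ (w : V) (x y : WithLp 2 (↥Z × ↥Y)), Bf w x y =
      a (πV x) (πV y) + c w (πV x) (πV y) - d (πS x) (πV y) + e (πS x) (πS y)
        + d (πS y) (πV x) := by
    intro w x y
    simp only [hBfdef, ContinuousLinearMap.add_apply, ContinuousLinearMap.sub_apply,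
      ContinuousLinearMap.bilinearComp_apply, ContinuousLinearMap.flip_apply]
    ring
  have hcoerineq : ∀ (w : V) (x : WithLp 2 (↥Z × ↥Y)), γ * ‖x‖ * ‖x‖ ≤ Bf w x x := by
    intro w x
    have h1 : γ * ‖x‖ * ‖x‖ ≤ α * ‖πV x‖ ^ 2 + η * ‖πS x‖ ^ 2 := by
      nlinarith [hnormE x, sq_nonneg ‖πV x‖, sq_nonneg ‖πS x‖, sq_nonneg ‖x‖]
    have h2 : α * ‖πV x‖ ^ 2 + η * ‖πS x‖ ^ 2 ≤ a (πV x) (πV x) + e (πS x) (πS x) :=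
      add_le_add (ha _) (he _ (hmemS x))
    have h3 : Bf w x x = a (πV x) (πV x) + e (πS x) (πS x) := by
      rw [hBapp, hcskew]; ring
    linarith
  have hcoer : ∀ w : V, IsCoercive (Bf w) := fun w => ⟨γ, hγ, hcoerineq w⟩
  -- the right-hand side functional
  set ℓ : WithLp 2 (↥Z × ↥Y) →L[ℝ] ℝ := F.comp πV + G.comp πS with hℓdef
  have hℓapp : ∀ x : WithLp 2 (↥Z × ↥Y), ℓ x = F (πV x) + G (πS x) := by
    intro x; simp [hℓdef]
  have hℓ : ‖ℓ‖ ≤ Rn := by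
    refine ContinuousLinearMap.opNorm_le_bound _ hRn0 fun x => ?_
    have h1 : ‖ℓ x‖ ≤ ‖F‖ * ‖πV x‖ + ‖G‖ * ‖πS x‖ := by
      rw [hℓapp]
      exact (norm_add_le _ _).trans (add_le_add (F.le_opNorm _) (G.le_opNorm _))
    have h2 : ‖F‖ * ‖πV x‖ + ‖G‖ * ‖πS x‖ ≤
        Rn * Real.sqrt (‖πV x‖ ^ 2 + ‖πS x‖ ^ 2) := by
      rw [hRndef]; exact cauchy_two _ _ _ _
    have h3 : Real.sqrt (‖πV x‖ ^ 2 + ‖πS x‖ ^ 2) = ‖x‖ := by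
      rw [← hnormE x]; exact Real.sqrt_sq (norm_nonneg x)
    rw [h3] at h2
    linarith
  -- Lax-Milgram solution operator
  set sol : V → WithLp 2 (↥Z × ↥Y) := fun w =>
    (hcoer w).continuousLinearEquivOfBilin.symm
      ((InnerProductSpace.toDual ℝ (WithLp 2 (↥Z × ↥Y))).symm ℓ) with hsoldef
  have hsol : ∀ (w : V) (y : WithLp 2 (↥Z × ↥Y)), Bf w (sol w) y = ℓ y := by
    intro w y
    have h1 : ⟪(hcoer w).continuousLinearEquivOfBilin (sol w), y⟫_ℝ = Bf w (sol w) y :=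
      (hcoer w).continuousLinearEquivOfBilin_apply _ _
    rw [hsoldef, ContinuousLinearEquiv.apply_symm_apply] at h1
    rw [← h1]
    exact InnerProductSpace.toDual_symm_apply
  have hsolu : ∀ (w : V) (x : WithLp 2 (↥Z × ↥Y)), (∀ y, Bf w x y = ℓ y) → x = sol w := by
    intro w x hx
    have h1 : (InnerProductSpace.toDual ℝ (WithLp 2 (↥Z × ↥Y))).symm ℓ =
        (hcoer w).continuousLinearEquivOfBilin x := by
      refine (hcoer w).unique_continuousLinearEquivOfBilin fun y => ?_
      rw [InnerProductSpace.toDual_symm_apply, hx y]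
    calc x = (hcoer w).continuousLinearEquivOfBilin.symm
          ((hcoer w).continuousLinearEquivOfBilin x) :=
        (ContinuousLinearEquiv.symm_apply_apply _ _).symm
      _ = sol w := by rw [← h1]
  -- a priori bound
  have hbound : ∀ (w : V) (x : WithLp 2 (↥Z × ↥Y)), (∀ y, Bf w x y = ℓ y) →
      γ * ‖x‖ ≤ Rn := by
    intro w x hx
    rcases eq_or_lt_of_le (norm_nonneg x) with h0 | h0
    · rw [← h0, mul_zero]; exact hRn0
    · have h1 : γ * ‖x‖ * ‖x‖ ≤ ‖ℓ‖ * ‖x‖ := by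
        calc γ * ‖x‖ * ‖x‖ ≤ Bf w x x := hcoerineq w x
          _ = ℓ x := hx x
          _ ≤ ‖ℓ x‖ := le_abs_self _
          _ ≤ ‖ℓ‖ * ‖x‖ := ℓ.le_opNorm x
      have h2 : γ * ‖x‖ ≤ ‖ℓ‖ := le_of_mul_le_mul_right h1 h0
      exact h2.trans hℓ
  -- contraction constant
  set κ : ℝ := δ * Rn / γ ^ 2 with hκdef
  clear_value κ
  have hκ0 : 0 ≤ κ := by
    rw [hκdef]
    exact div_nonneg (mul_nonneg hδ.le hRn0) (sq_nonneg γ)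
  have hκ1 : κ < 1 := by
    have h : δ * Rn / γ ^ 2 = δ / γ ^ 2 * Rn := by ring
    rw [hκdef, h]; exact hsmall
  have hlipT : ∀ w w' : WithLp 2 (↥Z × ↥Y),
      ‖sol (πV w) - sol (πV w')‖ ≤ κ * ‖w - w'‖ := by
    intro w w'
    have hx := hsol (πV w)
    have hx' := hsol (πV w')
    have hx'b : γ * ‖sol (πV w')‖ ≤ Rn := hbound _ _ hx'
    set x := sol (πV w) with hxdef
    set x' := sol (πV w') with hx'def
    clear_value x x'
    rcases eq_or_lt_of_le (norm_nonneg (x - x')) with h0 | h0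
    · rw [← h0]
      exact mul_nonneg hκ0 (norm_nonneg _)
    · have key : (γ * ‖x - x'‖) * ‖x - x'‖ ≤ (δ * ‖w - w'‖ * ‖x'‖) * ‖x - x'‖ := by
        have h1 : γ * ‖x - x'‖ * ‖x - x'‖ ≤ Bf (πV w) (x - x') (x - x') :=
          hcoerineq (πV w) (x - x')
        have h2 : Bf (πV w) (x - x') (x - x') =
            c (πV w') (πV x') (πV (x - x')) - c (πV w) (πV x') (πV (x - x')) := by
          have h2a : Bf (πV w) (x - x') (x - x') =
              Bf (πV w) x (x - x') - Bf (πV w) x' (x - x') := by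
            simp only [map_sub, ContinuousLinearMap.sub_apply]
            ring
          rw [h2a, hx (x - x'), ← hx' (x - x'), hBapp, hBapp]
          ring
        have h3 : c (πV w') (πV x') (πV (x - x')) - c (πV w) (πV x') (πV (x - x')) =
            c (πV w' - πV w) (πV x') (πV (x - x')) := by
          simp only [map_sub, ContinuousLinearMap.sub_apply]
          ring
        have h4 : |c (πV w' - πV w) (πV x') (πV (x - x'))| ≤
            δ * ‖πV w' - πV w‖ * ‖πV x'‖ * ‖πV (x - x')‖ := hcbdd _ _ _
        have h5 : ‖πV w' - πV w‖ ≤ ‖w - w'‖ := by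
          have : πV w' - πV w = πV (w' - w) := (map_sub πV w' w).symm
          rw [this]
          exact (hπVle _).trans (le_of_eq (norm_sub_rev _ _))
        have h6 : δ * ‖πV w' - πV w‖ * ‖πV x'‖ * ‖πV (x - x')‖ ≤
            δ * ‖w - w'‖ * ‖x'‖ * ‖x - x'‖ := by
          gcongr <;> first
            | exact hδ.le
            | exact h5
            | exact hπVle _
        calc γ * ‖x - x'‖ * ‖x - x'‖ ≤ Bf (πV w) (x - x') (x - x') := h1
          _ = c (πV w' - πV w) (πV x') (πV (x - x')) := by rw [h2, h3]
          _ ≤ |c (πV w' - πV w) (πV x') (πV (x - x'))| := le_abs_self _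
          _ ≤ δ * ‖πV w' - πV w‖ * ‖πV x'‖ * ‖πV (x - x')‖ := h4
          _ ≤ δ * ‖w - w'‖ * ‖x'‖ * ‖x - x'‖ := h6
      have hle : γ * ‖x - x'‖ ≤ δ * ‖w - w'‖ * ‖x'‖ := le_of_mul_le_mul_right key h0
      have hgoal : ∀ A W X : ℝ, 0 ≤ A → 0 ≤ W → γ * A ≤ δ * W * X → γ * X ≤ Rn →
          A ≤ δ * Rn / γ ^ 2 * W := by
        intro A W X hA hW h1 h2
        rw [div_mul_eq_mul_div, le_div_iff₀ (pow_pos hγ 2)]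
        calc A * γ ^ 2 = γ * (γ * A) := by ring
          _ ≤ γ * (δ * W * X) := mul_le_mul_of_nonneg_left h1 hγ.le
          _ = δ * W * (γ * X) := by ring
          _ ≤ δ * W * Rn := mul_le_mul_of_nonneg_left h2 (mul_nonneg hδ.le hW)
          _ = δ * Rn * W := by ring
      rw [hκdef]
      exact hgoal _ _ _ (norm_nonneg _) (norm_nonneg _) hle hx'b
  haveI : Nonempty (WithLp 2 (↥Z × ↥Y)) := ⟨0⟩
  have hcontr : ContractingWith ⟨κ, hκ0⟩ (fun w : WithLp 2 (↥Z × ↥Y) => sol (πV w)) := by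
    constructor
    · exact_mod_cast hκ1
    · refine LipschitzWith.of_dist_le_mul fun w w' => ?_
      rw [dist_eq_norm, dist_eq_norm]
      exact hlipT w w'
  set xs : WithLp 2 (↥Z × ↥Y) :=
    ContractingWith.fixedPoint (fun w : WithLp 2 (↥Z × ↥Y) => sol (πV w)) hcontr with hxsdef
  have hxsfix : sol (πV xs) = xs := hcontr.fixedPoint_isFixedPt
  clear_value xs
  have hxseq : ∀ y, Bf (πV xs) xs y = ℓ y := fun y => by
    have h := hsol (πV xs) y; rwa [hxsfix] at h
  have hred_unique : ∀ x : WithLp 2 (↥Z × ↥Y), (∀ y, Bf (πV x) x y = ℓ y) → x = xs := by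
    intro x hx
    have hfix : (fun w : WithLp 2 (↥Z × ↥Y) => sol (πV w)) x = x := (hsolu _ _ hx).symm
    exact (hcontr.fixedPoint_unique hfix).trans hxsdef.symm
  -- the solution components
  set u : V := πV xs with hudef
  set J : S := πS xs with hJdef
  clear_value u J
  have huZ : ∀ q : Q, b q u = 0 := by rw [hudef]; exact hmemV xs
  have hJY : ∀ ψ : Ψ, m ψ J = 0 := by rw [hJdef]; exact hmemS xs
  -- recover the pressure p
  have hΛ : ∀ v : V, (∀ q : Q, b q v = 0) → (a u + c u u - d J - F) v = 0 := by
    intro v hv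
    set y : WithLp 2 (↥Z × ↥Y) :=
      (WithLp.prodContinuousLinearEquiv 2 ℝ ↥Z ↥Y).symm (⟨v, (hZmem v).mpr hv⟩, 0) with hydef
    have hy1 : πV y = v := by simp only [hπVapp, hydef]; rfl
    have hy2 : πS y = 0 := by simp only [hπSapp, hydef]; rfl
    have h := hxseq y
    rw [hBapp, hℓapp, hy1, hy2] at h
    simp only [map_zero, ContinuousLinearMap.zero_apply, add_zero] at h
    simp only [ContinuousLinearMap.sub_apply, ContinuousLinearMap.add_apply]
    rw [← hudef, ← hJdef] at h
    linarith
  obtain ⟨p, hp, hpu⟩ := recover_aux b β₁ hβ₁ hbn (a u + c u u - d J - F) hΛ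
  have hpv : ∀ v : V, b p v = a u v + c u u v - d J v - F v := by
    intro v
    have h := hp v
    simpa only [ContinuousLinearMap.sub_apply, ContinuousLinearMap.add_apply] using h
  -- recover the potential φ
  have hΘ : ∀ K : S, (∀ ψ : Ψ, m ψ K = 0) → (e J + d.flip u - G) K = 0 := by
    intro K hK
    set y : WithLp 2 (↥Z × ↥Y) :=
      (WithLp.prodContinuousLinearEquiv 2 ℝ ↥Z ↥Y).symm (0, ⟨K, (hYmem K).mpr hK⟩) with hydef
    have hy1 : πV y = 0 := by simp only [hπVapp, hydef]; rfl
    have hy2 : πS y = K := by simp only [hπSapp, hydef]; rfl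
    have h := hxseq y
    rw [hBapp, hℓapp, hy1, hy2] at h
    simp only [map_zero, ContinuousLinearMap.zero_apply, add_zero, zero_add] at h
    simp only [ContinuousLinearMap.sub_apply, ContinuousLinearMap.add_apply,
      ContinuousLinearMap.flip_apply]
    rw [← hudef, ← hJdef] at h
    linarith
  obtain ⟨φ, hφ, hφu⟩ := recover_aux m β₂ hβ₂ hmn (e J + d.flip u - G) hΘ
  have hφK : ∀ K : S, m φ K = e J K + d K u - G K := by
    intro K
    have h := hφ K
    simpa only [ContinuousLinearMap.sub_apply, ContinuousLinearMap.add_apply,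
      ContinuousLinearMap.flip_apply] using h
  -- the four equations for (u, p, J, φ)
  have eq1 : ∀ v : V, a u v + c u u v - b p v - d J v = F v := fun v => by
    have h := hpv v; linarith
  have eq3 : ∀ K : S, e J K - m φ K + d K u = G K := fun K => by
    have h := hφK K; linarith
  constructor
  · -- existence and uniqueness
    refine ⟨(u, p, J, φ), ⟨eq1, huZ, eq3, hJY⟩, ?_⟩
    rintro ⟨u', p', J', φ'⟩ ⟨e1, e2, e3, e4⟩
    dsimp only at e1 e2 e3 e4
    set y' : WithLp 2 (↥Z × ↥Y) :=
      (WithLp.prodContinuousLinearEquiv 2 ℝ ↥Z ↥Y).symm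
        (⟨u', (hZmem u').mpr e2⟩, ⟨J', (hYmem J').mpr e4⟩) with hy'def
    have hy'1 : πV y' = u' := by simp only [hπVapp, hy'def]; rfl
    have hy'2 : πS y' = J' := by simp only [hπSapp, hy'def]; rfl
    have hy'eq : ∀ y, Bf (πV y') y' y = ℓ y := by
      intro y
      rw [hBapp, hℓapp, hy'1, hy'2]
      have h1 := e1 (πV y)
      have h3 := e3 (πS y)
      have hbz := hmemV y p'
      have hmz := hmemS y φ'
      linarith
    have hy'xs : y' = xs := hred_unique y' hy'eq
    have hu' : u' = u := by rw [← hy'1, hy'xs, ← hudef]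
    have hJ' : J' = J := by rw [← hy'2, hy'xs, ← hJdef]
    have hp' : p' = p := by
      refine hpu p' fun v => ?_
      have h := e1 v
      rw [hu', hJ'] at h
      simp only [ContinuousLinearMap.sub_apply, ContinuousLinearMap.add_apply]
      linarith
    have hφ' : φ' = φ := by
      refine hφu φ' fun K => ?_
      have h := e3 K
      rw [hu', hJ'] at h
      simp only [ContinuousLinearMap.sub_apply, ContinuousLinearMap.add_apply,
        ContinuousLinearMap.flip_apply]
      linarith
    simp only [Prod.mk.injEq]
    exact ⟨hu', hp', hJ', hφ'⟩
  · -- the stability estimate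
    rintro ⟨u', p', J', φ'⟩ ⟨e1, e2, e3, e4⟩
    dsimp only at e1 e2 e3 e4 ⊢
    have hau : a u' u' + e J' J' = F u' + G J' := by
      have h1 := e1 u'
      have h3 := e3 J'
      have h2 := e2 p'
      have h4 := e4 φ'
      have h5 := hcskew u' u'
      rw [h5] at h1
      linarith
    have hFu : F u' ≤ ‖F‖ * ‖u'‖ :=
      (le_abs_self _).trans (by rw [← Real.norm_eq_abs]; exact F.le_opNorm u')
    have hGJ : G J' ≤ ‖G‖ * ‖J'‖ :=
      (le_abs_self _).trans (by rw [← Real.norm_eq_abs]; exact G.le_opNorm J')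
    have hcs : ‖F‖ * ‖u'‖ + ‖G‖ * ‖J'‖ ≤ Rn * Real.sqrt (‖u'‖ ^ 2 + ‖J'‖ ^ 2) := by
      rw [hRndef]; exact cauchy_two _ _ _ _
    set s : ℝ := Real.sqrt (‖u'‖ ^ 2 + ‖J'‖ ^ 2) with hsdef
    clear_value s
    have hs0 : 0 ≤ s := by rw [hsdef]; exact Real.sqrt_nonneg _
    have hs2 : s ^ 2 = ‖u'‖ ^ 2 + ‖J'‖ ^ 2 := by
      rw [hsdef]; exact Real.sq_sqrt (by positivity)
    have hA := ha u'
    have hE := he J' e4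
    have k1 : γ * ‖u'‖ ^ 2 ≤ α * ‖u'‖ ^ 2 := mul_le_mul_of_nonneg_right hγa (sq_nonneg _)
    have k2 : γ * ‖J'‖ ^ 2 ≤ η * ‖J'‖ ^ 2 := mul_le_mul_of_nonneg_right hγe (sq_nonneg _)
    have h6 : (γ * s) * s ≤ Rn * s := by
      have hgs : γ * s * s = γ * ‖u'‖ ^ 2 + γ * ‖J'‖ ^ 2 := by
        have h' : s * s = ‖u'‖ ^ 2 + ‖J'‖ ^ 2 := by rw [← hs2]; ring
        rw [mul_assoc, h', mul_add]
      rw [hgs]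
      linarith
    rcases eq_or_lt_of_le hs0 with h0 | h0
    · rw [← h0, mul_zero]; exact hRn0
    · exact le_of_mul_le_mul_right h6 h0
end

section
/- Let V be a real normed vector space and let c : V × V × V → ℝ be a trilinear form satisfying |c(u,v,w)| ≤ δ‖u‖‖v‖‖w‖ for all u, v, w ∈ V (for some δ > 0) and c(u,v,v) = 0 for all u, v ∈ V. Then for all u, v, w ∈ V: |c(u,u,w) − c(v,v,w)| ≤ δ·(‖v‖‖w‖ + ‖u − v + w‖·(‖u‖ + ‖v‖))·‖w‖. -/
/-- Lemma 5.6 of the paper, abstract form: if `c` is a bounded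
trilinear form on a real normed space `V` with `|c(u,v,w)| ≤ δ‖u‖‖v‖‖w‖` and
`c(u,v,v) = 0`, then
`|c(u,u,w) - c(v,v,w)| ≤ δ (‖v‖‖w‖ + ‖u - v + w‖ (‖u‖ + ‖v‖)) ‖w‖`. -/
theorem stmt_7
    {V : Type*} [NormedAddCommGroup V] [NormedSpace ℝ V]
    (c : V →L[ℝ] V →L[ℝ] V →L[ℝ] ℝ)
    (δ : ℝ) (hδ : 0 < δ)
    (hcbdd : ∀ u v w : V, |c u v w| ≤ δ * ‖u‖ * ‖v‖ * ‖w‖)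
    (hcskew : ∀ u v : V, c u v v = 0) :
    ∀ u v w : V,
      |c u u w - c v v w|
        ≤ δ * (‖v‖ * ‖w‖ + ‖u - v + w‖ * (‖u‖ + ‖v‖)) * ‖w‖ := by
  intro u v w
  have key : c u u w - c v v w
      = c u (u - v + w) w + c (u - v + w) v w - c w v w := by
    have h1 : c u w w = 0 := hcskew u w
    simp only [map_add, map_sub, ContinuousLinearMap.add_apply,
      ContinuousLinearMap.sub_apply, h1]
    ring
  rw [key]
  have h1 := hcbdd u (u - v + w) w
  have h2 := hcbdd (u - v + w) v w
  have h3 := hcbdd w v w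
  calc |c u (u - v + w) w + c (u - v + w) v w - c w v w|
      ≤ |c u (u - v + w) w| + |c (u - v + w) v w| + |c w v w| := by
        have := abs_sub (c u (u - v + w) w + c (u - v + w) v w) (c w v w)
        have := abs_add_le (c u (u - v + w) w) (c (u - v + w) v w)
        calc |c u (u - v + w) w + c (u - v + w) v w - c w v w|
            ≤ |c u (u - v + w) w + c (u - v + w) v w| + |c w v w| :=
              abs_sub _ _
          _ ≤ |c u (u - v + w) w| + |c (u - v + w) v w| + |c w v w| := by
              gcongr
    _ ≤ δ * ‖u‖ * ‖u - v + w‖ * ‖w‖ + δ * ‖u - v + w‖ * ‖v‖ * ‖w‖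
          + δ * ‖w‖ * ‖v‖ * ‖w‖ := by gcongr <;> assumption
    _ = δ * (‖v‖ * ‖w‖ + ‖u - v + w‖ * (‖u‖ + ‖v‖)) * ‖w‖ := by ring
end

section
/- Suppose (u,p,J) ∈ V × Q × S satisfies the continuous momentum equation a(u,v) + c(u,u,v) − b(p,v) − d(J,v) = F(v) for all v ∈ V, and (u_h,p_h,J_h) ∈ V_h × Q_h × S_h satisfies the discrete momentum equation a_h(u_h,v) + c_h(u_h,u_h,v) − b(p_h,v) − d_h(J_h,v) = F_h(v) for all v ∈ V_h. Then for every q_h ∈ Q_h and every v ∈ V_h the identity b(q_h − p_h, v) = b(q_h − p, v) + (F_h(v) − F(v)) + (a(u,v) − a_h(u_h,v)) + (c(u,u,v) − c_h(u_h,u_h,v)) + (d_h(J_h,v) − d(J,v)) holds; consequently, by the discrete inf-sup condition, for every q_h ∈ Q_h: ‖p − p_h‖_Q ≤ (1 + ‖b‖/β̃)·‖p − q_h‖_Q + β̃^{−1}·( sup_{0≠v∈V_h}|F_h(v) − F(v)|/‖v‖ + sup_{0≠v∈V_h}|a(u,v) − a_h(u_h,v)|/‖v‖ + sup_{0≠v∈V_h}|c(u,u,v)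 − c_h(u_h,u_h,v)|/‖v‖ + sup_{0≠v∈V_h}|d_h(J_h,v) − d(J,v)|/‖v‖ ), provided these suprema are finite. -/
set_option maxHeartbeats 1600000 in
/-- abstract backbone of the pressure error estimate (42) in
Theorem 5.1: the identity `b(q_h - p_h, v) = M₁ + ⋯ + M₅` for all
`q_h ∈ Q_h`, `v ∈ V_h`, and the resulting bound via the discrete inf-sup
condition: `‖p - p_h‖ ≤ (1 + ‖b‖/β̃) ‖p - q_h‖ + β̃⁻¹ (sum of the suprema)`,
the suprema being assumed finite. -/
theorem stmt_10
    {V Q S : Type*}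
    [NormedAddCommGroup V] [InnerProductSpace ℝ V] [CompleteSpace V]
    [NormedAddCommGroup Q] [InnerProductSpace ℝ Q] [CompleteSpace Q]
    [NormedAddCommGroup S] [InnerProductSpace ℝ S] [CompleteSpace S]
    (b : Q →L[ℝ] V →L[ℝ] ℝ)
    (a : V →ₗ[ℝ] V →ₗ[ℝ] ℝ) (c : V →ₗ[ℝ] V →ₗ[ℝ] V →ₗ[ℝ] ℝ)
    (d : S →ₗ[ℝ] V →ₗ[ℝ] ℝ) (F : V →ₗ[ℝ] ℝ)
    (Vh : Submodule ℝ V) (Qh : Submodule ℝ Q) (Sh : Submodule ℝ S)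
    (ah : Vh →ₗ[ℝ] Vh →ₗ[ℝ] ℝ) (ch : Vh →ₗ[ℝ] Vh →ₗ[ℝ] Vh →ₗ[ℝ] ℝ)
    (dh : Sh →ₗ[ℝ] Vh →ₗ[ℝ] ℝ) (Fh : Vh →ₗ[ℝ] ℝ)
    (β : ℝ) (hβ : 0 < β)
    (hinfsup : ∀ q : Qh,
        β * ‖(q : Q)‖ ≤ ⨆ v : {v : Vh // v ≠ 0}, b (q : Q) ((v : Vh) : V) / ‖(v : Vh)‖)
    (u : V) (p : Q) (J : S)
    (hcont : ∀ v : V, a u v + c u u v - b p v - d J v = F v)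
    (uh : Vh) (ph : Qh) (Jh : Sh)
    (hdisc : ∀ v : Vh,
        ah uh v + ch uh uh v - b (ph : Q) ((v : Vh) : V) - dh Jh v = Fh v)
    (hbdd₁ : BddAbove (Set.range fun v : {v : Vh // v ≠ 0} =>
        |Fh (v : Vh) - F ((v : Vh) : V)| / ‖(v : Vh)‖))
    (hbdd₂ : BddAbove (Set.range fun v : {v : Vh // v ≠ 0} =>
        |a u ((v : Vh) : V) - ah uh (v : Vh)| / ‖(v : Vh)‖))
    (hbdd₃ : BddAbove (Set.range fun v : {v : Vh // v ≠ 0} =>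
        |c u u ((v : Vh) : V) - ch uh uh (v : Vh)| / ‖(v : Vh)‖))
    (hbdd₄ : BddAbove (Set.range fun v : {v : Vh // v ≠ 0} =>
        |dh Jh (v : Vh) - d J ((v : Vh) : V)| / ‖(v : Vh)‖)) :
    (∀ qh : Qh, ∀ v : Vh,
        b ((qh : Q) - (ph : Q)) ((v : Vh) : V)
          = b ((qh : Q) - p) ((v : Vh) : V)
            + (Fh v - F ((v : Vh) : V))
            + (a u ((v : Vh) : V) - ah uh v)
            + (c u u ((v : Vh) : V) - ch uh uh v)
            + (dh Jh v - d J ((v : Vh) : V))) ∧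
    (∀ qh : Qh,
        ‖p - (ph : Q)‖
          ≤ (1 + ‖b‖ / β) * ‖p - (qh : Q)‖
            + β⁻¹ *
              ((⨆ v : {v : Vh // v ≠ 0},
                  |Fh (v : Vh) - F ((v : Vh) : V)| / ‖(v : Vh)‖)
               + (⨆ v : {v : Vh // v ≠ 0},
                  |a u ((v : Vh) : V) - ah uh (v : Vh)| / ‖(v : Vh)‖)
               + (⨆ v : {v : Vh // v ≠ 0},
                  |c u u ((v : Vh) : V) - ch uh uh (v : Vh)| / ‖(v : Vh)‖)
               + (⨆ v : {v : Vh // v ≠ 0},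
                  |dh Jh (v : Vh) - d J ((v : Vh) : V)| / ‖(v : Vh)‖))) := by

  have key : ∀ qh : Qh, ∀ v : Vh,
      b ((qh : Q) - (ph : Q)) ((v : Vh) : V)
        = b ((qh : Q) - p) ((v : Vh) : V)
          + (Fh v - F ((v : Vh) : V))
          + (a u ((v : Vh) : V) - ah uh v)
          + (c u u ((v : Vh) : V) - ch uh uh v)
          + (dh Jh v - d J ((v : Vh) : V)) := by
    intro qh v
    have h1 := hcont ((v : Vh) : V)
    have h2 := hdisc v
    simp only [map_sub, ContinuousLinearMap.sub_apply]
    linarith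
  refine ⟨key, fun qh => ?_⟩
  set S1 := ⨆ v : {v : Vh // v ≠ 0}, |Fh (v : Vh) - F ((v : Vh) : V)| / ‖(v : Vh)‖ with hS1
  set S2 := ⨆ v : {v : Vh // v ≠ 0}, |a u ((v : Vh) : V) - ah uh (v : Vh)| / ‖(v : Vh)‖ with hS2
  set S3 := ⨆ v : {v : Vh // v ≠ 0}, |c u u ((v : Vh) : V) - ch uh uh (v : Vh)| / ‖(v : Vh)‖ with hS3
  set S4 := ⨆ v : {v : Vh // v ≠ 0}, |dh Jh (v : Vh) - d J ((v : Vh) : V)| / ‖(v : Vh)‖ with hS4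
  have hqp : ((qh - ph : Qh) : Q) = (qh : Q) - (ph : Q) := rfl
  by_cases hne : Nonempty {v : Vh // v ≠ 0}
  · -- main case
    have hsup_le : (⨆ v : {v : Vh // v ≠ 0},
        b ((qh - ph : Qh) : Q) ((v : Vh) : V) / ‖(v : Vh)‖)
        ≤ ‖b‖ * ‖p - (qh : Q)‖ + (S1 + S2 + S3 + S4) := by
      apply ciSup_le
      intro v
      have hv : (0 : ℝ) < ‖(v : Vh)‖ := norm_pos_iff.2 v.2
      have hid := key qh v
      rw [hqp, hid]
      have hb : |b ((qh : Q) - p) ((v : Vh) : V)| ≤ ‖b‖ * ‖p - (qh : Q)‖ * ‖(v : Vh)‖ := by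
        have h1 : |b ((qh : Q) - p) ((v : Vh) : V)| ≤ ‖b ((qh : Q) - p)‖ * ‖((v : Vh) : V)‖ :=
          (b ((qh : Q) - p)).le_opNorm _
        have h2 : ‖b ((qh : Q) - p)‖ ≤ ‖b‖ * ‖(qh : Q) - p‖ := b.le_opNorm _
        have h3 : ‖((v : Vh) : V)‖ = ‖(v : Vh)‖ := rfl
        have h4 : ‖(qh : Q) - p‖ = ‖p - (qh : Q)‖ := norm_sub_rev _ _
        calc |b ((qh : Q) - p) ((v : Vh) : V)| ≤ ‖b ((qh : Q) - p)‖ * ‖(v : Vh)‖ := by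
              rw [← h3]; exact h1
          _ ≤ ‖b‖ * ‖p - (qh : Q)‖ * ‖(v : Vh)‖ := by
              rw [← h4]; exact mul_le_mul_of_nonneg_right h2 (norm_nonneg _)
      have e1 : |Fh (v : Vh) - F ((v : Vh) : V)| / ‖(v : Vh)‖ ≤ S1 := le_ciSup hbdd₁ v
      have e2 : |a u ((v : Vh) : V) - ah uh (v : Vh)| / ‖(v : Vh)‖ ≤ S2 := le_ciSup hbdd₂ v
      have e3 : |c u u ((v : Vh) : V) - ch uh uh (v : Vh)| / ‖(v : Vh)‖ ≤ S3 := le_ciSup hbdd₃ v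
      have e4 : |dh Jh (v : Vh) - d J ((v : Vh) : V)| / ‖(v : Vh)‖ ≤ S4 := le_ciSup hbdd₄ v
      rw [div_le_iff₀ hv]
      have habs : ∀ x : ℝ, x ≤ |x| := fun x => le_abs_self x
      have h5 : |Fh v - F ((v : Vh) : V)| ≤ S1 * ‖(v : Vh)‖ := (div_le_iff₀ hv).mp e1
      have h6 : |a u ((v : Vh) : V) - ah uh v| ≤ S2 * ‖(v : Vh)‖ := (div_le_iff₀ hv).mp e2
      have h7 : |c u u ((v : Vh) : V) - ch uh uh v| ≤ S3 * ‖(v : Vh)‖ := (div_le_iff₀ hv).mp e3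
      have h8 : |dh Jh v - d J ((v : Vh) : V)| ≤ S4 * ‖(v : Vh)‖ := (div_le_iff₀ hv).mp e4
      have := habs (b ((qh : Q) - p) ((v : Vh) : V))
      have := habs (Fh v - F ((v : Vh) : V))
      have := habs (a u ((v : Vh) : V) - ah uh v)
      have := habs (c u u ((v : Vh) : V) - ch uh uh v)
      have := habs (dh Jh v - d J ((v : Vh) : V))
      nlinarith
    have hβn : β * ‖((qh - ph : Qh) : Q)‖ ≤ ‖b‖ * ‖p - (qh : Q)‖ + (S1 + S2 + S3 + S4) :=
      le_trans (hinfsup (qh - ph)) hsup_le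
    have hqhph : ‖(qh : Q) - (ph : Q)‖ ≤ β⁻¹ * (‖b‖ * ‖p - (qh : Q)‖ + (S1 + S2 + S3 + S4)) := by
      rw [← hqp]
      rw [inv_mul_eq_div, le_div_iff₀ hβ, mul_comm]
      exact hβn
    have htri : ‖p - (ph : Q)‖ ≤ ‖p - (qh : Q)‖ + ‖(qh : Q) - (ph : Q)‖ := by
      have := norm_add_le (p - (qh : Q)) ((qh : Q) - (ph : Q))
      rwa [sub_add_sub_cancel] at this
    calc ‖p - (ph : Q)‖ ≤ ‖p - (qh : Q)‖ + ‖(qh : Q) - (ph : Q)‖ := htri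
      _ ≤ ‖p - (qh : Q)‖ + β⁻¹ * (‖b‖ * ‖p - (qh : Q)‖ + (S1 + S2 + S3 + S4)) := by
          linarith
      _ = (1 + ‖b‖ / β) * ‖p - (qh : Q)‖ + β⁻¹ * (S1 + S2 + S3 + S4) := by
          field_simp
          ring
  · -- empty case
    have hempty : IsEmpty {v : Vh // v ≠ 0} := not_nonempty_iff.mp hne
    have hsup0 : ∀ f : {v : Vh // v ≠ 0} → ℝ, (⨆ v, f v) = 0 := fun f => by
      rw [iSup_of_empty']; exact Real.sSup_empty
    have hz := hinfsup (qh - ph)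
    rw [hsup0] at hz
    have hnn : ‖((qh - ph : Qh) : Q)‖ = 0 := by
      have h1 : β * ‖((qh - ph : Qh) : Q)‖ ≤ β * 0 := by rw [mul_zero]; exact hz
      exact le_antisymm (le_of_mul_le_mul_left h1 hβ) (norm_nonneg _)
    have heq : (qh : Q) = (ph : Q) := by
      have h3 : ((qh - ph : Qh) : Q) = 0 := norm_eq_zero.mp hnn
      rw [hqp] at h3
      exact sub_eq_zero.mp h3
    have z1 : S1 = 0 := hsup0 _
    have z2 : S2 = 0 := hsup0 _
    have z3 : S3 = 0 := hsup0 _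
    have z4 : S4 = 0 := hsup0 _
    rw [z1, z2, z3, z4]
    have hbb : 0 ≤ ‖b‖ / β := div_nonneg b.opNorm_nonneg hβ.le
    have h0 : 0 ≤ ‖p - (qh : Q)‖ := norm_nonneg _
    rw [← heq]
    nlinarith [mul_nonneg hbb h0]
end

section
/- Suppose (u,J,φ) ∈ V × S × Ψ satisfies the continuous electric equation e(J,K) − m(φ,K) + d(K,u) = G(K) for all K ∈ S, and (u_h,J_h,φ_h) ∈ V_h × S_h × Ψ_h satisfies the discrete electric equation e_h(J_h,K) − m(φ_h,K) + d_h(K,u_h) = G_h(K) for all K ∈ S_h. Then for every ψ_h ∈ Ψ_h and every K ∈ S_h the identity m(ψ_h − φ_h, K) = m(ψ_h − φ, K) + (G_h(K) − G(K)) + (e(J,K) − e_h(J_h,K)) + (d(K,u) − d_h(K,u_h)) holds; consequently, by the discrete inf-sup condition, for every ψ_h ∈ Ψ_h: ‖φ − φ_h‖_Ψ ≤ (1 + ‖m‖/β̃₂)·‖φ − ψ_h‖_Ψ + β̃₂^{−1}·( sup_{0≠K∈S_h}|G_h(K) − G(K)|/‖K‖ + sup_{0≠K∈S_h}|e(J,K)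 − e_h(J_h,K)|/‖K‖ + sup_{0≠K∈S_h}|d(K,u) − d_h(K,u_h)|/‖K‖ ), provided these suprema are finite. -/
/-- abstract backbone of the electric potential error estimate
(43) in Theorem 5.1: the identity `m(ψ_h - φ_h, K) = Q₁ + ⋯ + Q₄` for all
`ψ_h ∈ Ψ_h`, `K ∈ S_h`, and the resulting bound via the discrete inf-sup
condition: `‖φ - φ_h‖ ≤ (1 + ‖m‖/β̃₂) ‖φ - ψ_h‖ + β̃₂⁻¹ (sum of the suprema)`,
the suprema being assumed finite. -/
theorem stmt_11
    {V S Ψ : Type*}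
    [NormedAddCommGroup V] [InnerProductSpace ℝ V] [CompleteSpace V]
    [NormedAddCommGroup S] [InnerProductSpace ℝ S] [CompleteSpace S]
    [NormedAddCommGroup Ψ] [InnerProductSpace ℝ Ψ] [CompleteSpace Ψ]
    (m : Ψ →L[ℝ] S →L[ℝ] ℝ)
    (e : S →ₗ[ℝ] S →ₗ[ℝ] ℝ) (d : S →ₗ[ℝ] V →ₗ[ℝ] ℝ) (G : S →ₗ[ℝ] ℝ)
    (Vh : Submodule ℝ V) (Sh : Submodule ℝ S) (Ψh : Submodule ℝ Ψ)
    (eh : Sh →ₗ[ℝ] Sh →ₗ[ℝ] ℝ) (dh : Sh →ₗ[ℝ] Vh →ₗ[ℝ] ℝ) (Gh : Sh →ₗ[ℝ] ℝ)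
    (β₂ : ℝ) (hβ₂ : 0 < β₂)
    (hinfsup : ∀ ψ : Ψh,
        β₂ * ‖(ψ : Ψ)‖ ≤ ⨆ K : {K : Sh // K ≠ 0}, m (ψ : Ψ) ((K : Sh) : S) / ‖(K : Sh)‖)
    (u : V) (J : S) (φ : Ψ)
    (hcont : ∀ K : S, e J K - m φ K + d K u = G K)
    (uh : Vh) (Jh : Sh) (φh : Ψh)
    (hdisc : ∀ K : Sh,
        eh Jh K - m (φh : Ψ) ((K : Sh) : S) + dh K uh = Gh K)
    (hbdd₁ : BddAbove (Set.range fun K : {K : Sh // K ≠ 0} =>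
        |Gh (K : Sh) - G ((K : Sh) : S)| / ‖(K : Sh)‖))
    (hbdd₂ : BddAbove (Set.range fun K : {K : Sh // K ≠ 0} =>
        |e J ((K : Sh) : S) - eh Jh (K : Sh)| / ‖(K : Sh)‖))
    (hbdd₃ : BddAbove (Set.range fun K : {K : Sh // K ≠ 0} =>
        |d ((K : Sh) : S) u - dh (K : Sh) uh| / ‖(K : Sh)‖)) :
    (∀ ψh : Ψh, ∀ K : Sh,
        m ((ψh : Ψ) - (φh : Ψ)) ((K : Sh) : S)
          = m ((ψh : Ψ) - φ) ((K : Sh) : S)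
            + (Gh K - G ((K : Sh) : S))
            + (e J ((K : Sh) : S) - eh Jh K)
            + (d ((K : Sh) : S) u - dh K uh)) ∧
    (∀ ψh : Ψh,
        ‖φ - (φh : Ψ)‖
          ≤ (1 + ‖m‖ / β₂) * ‖φ - (ψh : Ψ)‖
            + β₂⁻¹ *
              ((⨆ K : {K : Sh // K ≠ 0},
                  |Gh (K : Sh) - G ((K : Sh) : S)| / ‖(K : Sh)‖)
               + (⨆ K : {K : Sh // K ≠ 0},
                  |e J ((K : Sh) : S) - eh Jh (K : Sh)| / ‖(K : Sh)‖)
               + (⨆ K : {K : Sh // K ≠ 0},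
                  |d ((K : Sh) : S) u - dh (K : Sh) uh| / ‖(K : Sh)‖))) := by
  have hid : ∀ ψh : Ψh, ∀ K : Sh,
      m ((ψh : Ψ) - (φh : Ψ)) ((K : Sh) : S)
        = m ((ψh : Ψ) - φ) ((K : Sh) : S)
          + (Gh K - G ((K : Sh) : S))
          + (e J ((K : Sh) : S) - eh Jh K)
          + (d ((K : Sh) : S) u - dh K uh) := by
    intro ψh K
    have h1 := hcont ((K : Sh) : S)
    have h2 := hdisc K
    have e1 : m ((ψh : Ψ) - (φh : Ψ)) ((K : Sh) : S)
        = m (ψh : Ψ) ((K : Sh) : S) - m (φh : Ψ) ((K : Sh) : S) := by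
      simp [map_sub]
    have e2 : m ((ψh : Ψ) - φ) ((K : Sh) : S)
        = m (ψh : Ψ) ((K : Sh) : S) - m φ ((K : Sh) : S) := by
      simp [map_sub]
    linarith
  refine ⟨hid, ?_⟩
  intro ψh
  set T1 := ⨆ K : {K : Sh // K ≠ 0}, |Gh (K : Sh) - G ((K : Sh) : S)| / ‖(K : Sh)‖ with hT1
  set T2 := ⨆ K : {K : Sh // K ≠ 0}, |e J ((K : Sh) : S) - eh Jh (K : Sh)| / ‖(K : Sh)‖ with hT2
  set T3 := ⨆ K : {K : Sh // K ≠ 0}, |d ((K : Sh) : S) u - dh (K : Sh) uh| / ‖(K : Sh)‖ with hT3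
  have hT1n : 0 ≤ T1 := Real.iSup_nonneg fun K => div_nonneg (abs_nonneg _) (norm_nonneg _)
  have hT2n : 0 ≤ T2 := Real.iSup_nonneg fun K => div_nonneg (abs_nonneg _) (norm_nonneg _)
  have hT3n : 0 ≤ T3 := Real.iSup_nonneg fun K => div_nonneg (abs_nonneg _) (norm_nonneg _)
  have hms : (0:ℝ) ≤ ‖m‖ * ‖φ - (ψh : Ψ)‖ := by positivity
  have hkey : β₂ * ‖((ψh - φh : Ψh) : Ψ)‖
      ≤ ‖m‖ * ‖φ - (ψh : Ψ)‖ + T1 + T2 + T3 := by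
    refine (hinfsup (ψh - φh)).trans (Real.iSup_le (fun K => ?_) (by linarith))
    have hKpos : (0:ℝ) < ‖(K : Sh)‖ := by
      simpa using norm_pos_iff.mpr (Subtype.coe_ne_coe.mpr K.2)
    have hidK := hid ψh (K : Sh)
    have hcoe : ((ψh - φh : Ψh) : Ψ) = (ψh : Ψ) - (φh : Ψ) := rfl
    rw [hcoe, hidK]
    have hb0 : m ((ψh : Ψ) - φ) (((K : Sh) : Sh) : S) / ‖(K : Sh)‖
        ≤ ‖m‖ * ‖φ - (ψh : Ψ)‖ := by
      rw [div_le_iff₀ hKpos]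
      calc m ((ψh : Ψ) - φ) (((K : Sh) : Sh) : S)
          ≤ |m ((ψh : Ψ) - φ) (((K : Sh) : Sh) : S)| := le_abs_self _
        _ ≤ ‖m‖ * ‖(ψh : Ψ) - φ‖ * ‖(((K : Sh) : Sh) : S)‖ := m.le_opNorm₂ _ _
        _ = ‖m‖ * ‖φ - (ψh : Ψ)‖ * ‖(K : Sh)‖ := by rw [norm_sub_rev]; rfl
    have hb1 : (Gh (K : Sh) - G ((K : Sh) : S)) / ‖(K : Sh)‖ ≤ T1 :=
      le_trans (div_le_div_of_nonneg_right (le_abs_self _) hKpos.le) (le_ciSup hbdd₁ K)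
    have hb2 : (e J ((K : Sh) : S) - eh Jh (K : Sh)) / ‖(K : Sh)‖ ≤ T2 :=
      le_trans (div_le_div_of_nonneg_right (le_abs_self _) hKpos.le) (le_ciSup hbdd₂ K)
    have hb3 : (d ((K : Sh) : S) u - dh (K : Sh) uh) / ‖(K : Sh)‖ ≤ T3 :=
      le_trans (div_le_div_of_nonneg_right (le_abs_self _) hKpos.le) (le_ciSup hbdd₃ K)
    have hsplit : (m ((ψh : Ψ) - φ) (((K : Sh) : Sh) : S)
        + (Gh (K : Sh) - G ((K : Sh) : S))
        + (e J ((K : Sh) : S) - eh Jh (K : Sh))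
        + (d ((K : Sh) : S) u - dh (K : Sh) uh)) / ‖(K : Sh)‖
        = m ((ψh : Ψ) - φ) (((K : Sh) : Sh) : S) / ‖(K : Sh)‖
          + (Gh (K : Sh) - G ((K : Sh) : S)) / ‖(K : Sh)‖
          + (e J ((K : Sh) : S) - eh Jh (K : Sh)) / ‖(K : Sh)‖
          + (d ((K : Sh) : S) u - dh (K : Sh) uh) / ‖(K : Sh)‖ := by ring
    rw [hsplit]
    linarith
  have hcoe2 : ((ψh - φh : Ψh) : Ψ) = (ψh : Ψ) - (φh : Ψ) := rfl
  have htri : ‖φ - (φh : Ψ)‖ ≤ ‖φ - (ψh : Ψ)‖ + ‖(ψh : Ψ) - (φh : Ψ)‖ := by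
    have := norm_add_le (φ - (ψh : Ψ)) ((ψh : Ψ) - (φh : Ψ))
    simpa using this
  rw [hcoe2] at hkey
  have h4 : ‖(ψh : Ψ) - (φh : Ψ)‖ ≤ β₂⁻¹ * (‖m‖ * ‖φ - (ψh : Ψ)‖ + T1 + T2 + T3) := by
    rw [le_inv_mul_iff₀ hβ₂]
    linarith
  have hβinv : (0:ℝ) ≤ β₂⁻¹ := le_of_lt (inv_pos.mpr hβ₂)
  calc ‖φ - (φh : Ψ)‖ ≤ ‖φ - (ψh : Ψ)‖ + ‖(ψh : Ψ) - (φh : Ψ)‖ := htri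
    _ ≤ ‖φ - (ψh : Ψ)‖ + β₂⁻¹ * (‖m‖ * ‖φ - (ψh : Ψ)‖ + T1 + T2 + T3) := by linarith
    _ = (1 + ‖m‖ / β₂) * ‖φ - (ψh : Ψ)‖ + β₂⁻¹ * (T1 + T2 + T3) := by
        field_simp; ring
end
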